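/- arXiv:1412.3026 — 9 statements merged into one kernel-verified Lean document; each statement's English description precedes it below -/
import Mathlib

section
/- For every positive integer n and all λ ∈ ℂ, Sp_n(0, e^{2πi/3}·λ) = e^{2πi(n+1)/3}·Sp_n(0, λ). In particular, the set of eigenvalues of M_n^{(0)} (with multiplicities) is invariant under rotation by 2π/3 about the origin. -/
/-- The `(n+1) × (n+1)` matrix `M_n^{(a)}` of the operator
`T_n(y) = y'' - (x² - a) y' + n x y` in the monomial basis `1, x, …, xⁿ`. -/
def Mmat (n : ℕ) (a : ℂ) : Matrix (Fin (n + 1)) (Fin (n + 1)) ℂ :=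
  Matrix.of fun i j =>
    if (j : ℕ) = (i : ℕ) + 1 then ((i : ℕ) + 1 : ℂ) * a
    else if (j : ℕ) = (i : ℕ) + 2 then ((i : ℕ) + 1 : ℂ) * ((i : ℕ) + 2 : ℂ)
    else if (i : ℕ) = (j : ℕ) + 1 then (n : ℂ) - (j : ℕ)
    else 0

/-- The `n`-th spectral polynomial `Sp_n(a, λ) = det (M_n^{(a)} - λ·Id)`. -/
def Sp (n : ℕ) (a lam : ℂ) : ℂ :=
  Matrix.det (Mmat n a - lam • (1 : Matrix (Fin (n + 1)) (Fin (n + 1)) ℂ))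

section aux

variable {n : ℕ} {ω : ℂ}

lemma entry_key (hω : ω ^ 3 = 1) (i j : Fin (n+1)) :
    ω ^ (i : ℕ) * (Mmat n 0 i j) * ω ^ (2 * (j : ℕ)) = ω * Mmat n 0 i j := by
  unfold Mmat
  simp only [Matrix.of_apply]
  split_ifs with h1 h2 h3
  · ring
  · rw [h2]
    have : ω ^ (i:ℕ) * (((i:ℕ) + 1 : ℂ) * ((i:ℕ) + 2 : ℂ)) * ω ^ (2 * ((i:ℕ) + 2))
        = (ω^3)^((i:ℕ)+1) * (ω * (((i:ℕ) + 1 : ℂ) * ((i:ℕ) + 2 : ℂ))) := by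
      ring
    rw [this, hω, one_pow, one_mul]
  · rw [h3]
    have : ω ^ ((j:ℕ)+1) * ((n : ℂ) - (j:ℕ)) * ω ^ (2 * (j:ℕ))
        = (ω^3)^((j:ℕ)) * (ω * ((n : ℂ) - (j:ℕ))) := by ring
    rw [this, hω, one_pow, one_mul]
  · ring

lemma conj_key (hω : ω ^ 3 = 1) (lam : ℂ) :
    Matrix.diagonal (fun i : Fin (n+1) => ω ^ (i : ℕ)) *
      (Mmat n 0 - (ω * lam) • 1) *
      Matrix.diagonal (fun j : Fin (n+1) => ω ^ (2 * (j : ℕ)))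
    = ω • (Mmat n 0 - lam • 1) := by
  ext i j
  rw [Matrix.mul_diagonal, Matrix.diagonal_mul]
  simp only [Matrix.smul_apply, Matrix.sub_apply, Matrix.one_apply, smul_eq_mul]
  by_cases hij : i = j
  · subst hij
    have hM : Mmat n 0 i i = 0 := by
      unfold Mmat; simp only [Matrix.of_apply]
      split_ifs <;> first | rfl | omega
    simp only [if_pos rfl, hM, eq_self_iff_true, if_true]
    have : ω ^ (i:ℕ) * (0 - ω * lam * 1) * ω ^ (2 * (i:ℕ))
        = (ω^3)^(i:ℕ) * (ω * (0 - lam * 1)) := by ring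
    rw [this, hω, one_pow, one_mul]
  · simp only [if_neg hij]
    have := entry_key hω (n := n) i j
    calc ω ^ (i:ℕ) * (Mmat n 0 i j - ω * lam * 0) * ω ^ (2 * (j:ℕ))
        = ω ^ (i:ℕ) * (Mmat n 0 i j) * ω ^ (2 * (j:ℕ)) := by ring
      _ = ω * Mmat n 0 i j := this
      _ = ω * (Mmat n 0 i j - lam * 0) := by ring

end aux

lemma sp_key {n : ℕ} {ω : ℂ} (hω : ω ^ 3 = 1) (lam : ℂ) :
    Sp n 0 (ω * lam) = ω ^ (n + 1) * Sp n 0 lam := by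
  have hconj := conj_key (n := n) hω lam
  have hdet := congrArg Matrix.det hconj
  rw [Matrix.det_mul, Matrix.det_mul, Matrix.det_diagonal, Matrix.det_diagonal,
    Matrix.det_smul] at hdet
  have hDE : (∏ i : Fin (n+1), ω ^ (i : ℕ)) * (∏ i : Fin (n+1), ω ^ (2 * (i : ℕ))) = 1 := by
    rw [← Finset.prod_mul_distrib]
    have : ∀ i : Fin (n+1), ω ^ (i : ℕ) * ω ^ (2 * (i : ℕ)) = (ω ^ 3) ^ (i : ℕ) := by
      intro i; rw [← pow_mul, ← pow_add]; ring_nf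
    simp [this, hω]
  have : (∏ i : Fin (n+1), ω ^ (i : ℕ)) * Matrix.det (Mmat n 0 - (ω * lam) • 1) *
      (∏ i : Fin (n+1), ω ^ (2 * (i : ℕ)))
      = Matrix.det (Mmat n 0 - (ω * lam) • 1) := by
    rw [mul_comm _ (Matrix.det _), mul_assoc, hDE, mul_one]
  rw [this] at hdet
  simpa [Sp, Fintype.card_fin] using hdet


/-- `Sp_n(0, e^{2πi/3} λ) = e^{2πi(n+1)/3} Sp_n(0, λ)`; in particular the zero set of
`Sp_n(0, ·)` (the spectrum of `M_n^{(0)}`) is invariant under rotation by `2π/3`. -/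
theorem Sp_zero_rotation_invariance (n : ℕ) (hn : 0 < n) :
    (∀ lam : ℂ,
      Sp n 0 (Complex.exp (2 * Real.pi * Complex.I / 3) * lam) =
        Complex.exp (2 * Real.pi * Complex.I * (n + 1) / 3) * Sp n 0 lam) ∧
    {lam : ℂ | Sp n 0 lam = 0} =
      (fun lam : ℂ => Complex.exp (2 * Real.pi * Complex.I / 3) * lam) ''
        {lam : ℂ | Sp n 0 lam = 0} := by
  set ω := Complex.exp (2 * Real.pi * Complex.I / 3) with hωdef
  have hω3 : ω ^ 3 = 1 := by
    rw [hωdef, ← Complex.exp_nat_mul]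
    push_cast
    have : (3 : ℂ) * (2 * Real.pi * Complex.I / 3) = 2 * Real.pi * Complex.I := by ring
    rw [this, Complex.exp_two_pi_mul_I]
  have hωn : ω ^ (n + 1) = Complex.exp (2 * Real.pi * Complex.I * (n + 1) / 3) := by
    rw [hωdef, ← Complex.exp_nat_mul]
    congr 1
    push_cast
    ring
  have key : ∀ lam : ℂ, Sp n 0 (ω * lam) = ω ^ (n + 1) * Sp n 0 lam := sp_key hω3
  constructor
  · intro lam; rw [key lam, hωn]
  · ext lam
    simp only [Set.mem_setOf_eq, Set.mem_image]
    constructor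
    · intro h
      refine ⟨ω ^ 2 * lam, ?_, ?_⟩
      · have h2 := key (ω ^ 2 * lam)
        have hcol : ω * (ω ^ 2 * lam) = lam := by
          rw [← mul_assoc, ← pow_succ']
          rw [hω3, one_mul]
        rw [hcol, h] at h2
        have hωne : ω ^ (n + 1) ≠ 0 := pow_ne_zero _ (Complex.exp_ne_zero _)
        exact (mul_eq_zero.mp h2.symm).resolve_left hωne
      · rw [← mul_assoc, ← pow_succ']
        rw [hω3, one_mul]
    · rintro ⟨mu, hmu, rfl⟩
      rw [key mu, hmu, mul_zero]
end

section
/- For every positive integer n there exists a polynomial q with real coefficients such that: if n+1 = 3k then Sp_n(0,λ) = q(λ³) and deg q = k; if n+1 = 3k+1 then Sp_n(0,λ) = λ·q(λ³) and deg q = k; if n+1 = 3k+2 then Sp_n(0,λ) = λ²·q(λ³) and deg q = k. -/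
open Polynomial Matrix

noncomputable section

lemma charpoly_eval' {m : ℕ} {R : Type*} [CommRing R] (A : Matrix (Fin m) (Fin m) R) (b : R) :
    A.charpoly.eval b = Matrix.det (b • (1 : Matrix (Fin m) (Fin m) R) - A) := by
  rw [Matrix.charpoly, ← Polynomial.coe_evalRingHom, RingHom.map_det]
  congr 1
  ext i j
  by_cases h : i = j <;>
    simp [Matrix.charmatrix_apply, Matrix.map_apply, h, Matrix.one_apply, Matrix.diagonal_apply]

lemma coeff_comp_C_mul_X {R : Type*} [CommRing R] (p : R[X]) (a : R) (i : ℕ) :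
    (p.comp (C a * X)).coeff i = p.coeff i * a ^ i := by
  induction p using Polynomial.induction_on' with
  | add p q hp hq => simp [add_comp, hp, hq, add_mul]
  | monomial m c =>
      simp only [monomial_comp, mul_pow, ← C_pow, ← mul_assoc, ← C_mul, coeff_C_mul,
        coeff_X_pow, coeff_monomial, mul_ite, mul_one, mul_zero, ite_mul, zero_mul]
      by_cases h : i = m
      · simp [h]
      · rw [if_neg (fun hh : m = i => h hh.symm), if_neg h]

def om : ℂ := ⟨-1/2, Real.sqrt 3 / 2⟩

lemma om_sq : om ^ 2 + om + 1 = 0 := by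
  have h3 : Real.sqrt 3 * Real.sqrt 3 = 3 := Real.mul_self_sqrt (by norm_num)
  have h3' : Real.sqrt 3 ^ 2 = 3 := Real.sq_sqrt (by norm_num)
  apply Complex.ext <;>
    simp [om, pow_two, Complex.add_re, Complex.mul_re, Complex.mul_im, h3, h3'] <;> nlinarith [h3']

lemma om_cube : om ^ 3 = 1 := by
  have := om_sq
  linear_combination (om - 1) * this

lemma om_ne_one : om ≠ 1 := by
  intro h
  have him : om.im = 0 := by rw [h]; simp
  simp [om] at him

lemma om_ne_zero : om ≠ 0 := by
  intro h
  have := om_cube; rw [h] at this; simp at this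

lemma om_pow_mod (m : ℕ) : om ^ m = om ^ (m % 3) := by
  conv_lhs => rw [← Nat.div_add_mod m 3, pow_add, pow_mul, om_cube, one_pow, one_mul]

lemma om_sq_ne_one : om ^ 2 ≠ 1 := by
  intro h
  have h2 := om_sq
  rw [h] at h2
  have heq : om = -2 := by linear_combination h2
  have him : om.im = 0 := by rw [heq]; simp
  simp [om] at him

lemma om_sq_ne_om : om ^ 2 ≠ om := by
  intro h
  have h2 := om_sq
  rw [h] at h2
  have heq : om = -(1/2) := by linear_combination h2/2
  have him : om.im = 0 := by rw [heq]; simp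
  simp [om] at him

lemma om_pow_ne {a b : ℕ} (h : a % 3 ≠ b % 3) : om ^ a ≠ om ^ b := by
  rw [om_pow_mod a, om_pow_mod b]
  have ha : a % 3 < 3 := Nat.mod_lt a (by norm_num)
  have hb : b % 3 < 3 := Nat.mod_lt b (by norm_num)
  interval_cases h1 : a % 3 <;> interval_cases h2 : b % 3 <;>
    (try simp only [pow_zero, pow_one]) <;>
    first
      | exact absurd rfl h
      | exact fun hh => om_ne_one hh.symm
      | exact om_ne_one
      | exact fun hh => om_sq_ne_one hh.symm
      | exact om_sq_ne_one
      | exact fun hh => om_sq_ne_om hh.symm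
      | exact om_sq_ne_om

lemma key_comm (n : ℕ) :
    Matrix.diagonal (fun i : Fin (n+1) => om ^ (i:ℕ)) * Mmat n 0
      = (om • Mmat n 0) * Matrix.diagonal (fun i : Fin (n+1) => om ^ (i:ℕ)) := by
  ext i j
  rw [Matrix.diagonal_mul, Matrix.mul_diagonal]
  have hpow : ∀ m : ℕ, om ^ (m + 3) = om ^ m := fun m => by
    rw [pow_add, om_cube, mul_one]
  simp only [Matrix.smul_apply, smul_eq_mul, Mmat, Matrix.of_apply]
  split_ifs with h1 h2 h3
  · simp
  · rw [h2]
    linear_combination (-((((i:ℕ):ℂ)+1) * (((i:ℕ):ℂ)+2))) * hpow (i:ℕ)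
  · rw [h3]; ring
  · simp

lemma det_comm (n : ℕ) (μ : ℂ) :
    ((om • Mmat n 0) - μ • 1).det = (Mmat n 0 - μ • 1).det := by
  set D := Matrix.diagonal (fun i : Fin (n+1) => om ^ (i:ℕ)) with hD
  have hDdet : D.det ≠ 0 := by
    rw [hD, Matrix.det_diagonal]
    exact Finset.prod_ne_zero_iff.mpr fun i _ => pow_ne_zero _ om_ne_zero
  have h : D * (Mmat n 0 - μ • 1) = ((om • Mmat n 0) - μ • 1) * D := by
    have h1 : D * (μ • (1 : Matrix (Fin (n+1)) (Fin (n+1)) ℂ)) = μ • D := by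
      simp [Matrix.mul_smul]
    have h2 : (μ • (1 : Matrix (Fin (n+1)) (Fin (n+1)) ℂ)) * D = μ • D := by
      simp [Matrix.smul_mul]
    rw [Matrix.mul_sub, Matrix.sub_mul, key_comm n, h1, h2]
  have h2 := congrArg Matrix.det h
  rw [Matrix.det_mul, Matrix.det_mul] at h2
  exact (mul_left_cancel₀ hDdet (h2.trans (mul_comm _ _))).symm

lemma Sp_funeq (n : ℕ) (lam : ℂ) : Sp n 0 (om * lam) = om ^ (n+1) * Sp n 0 lam := by
  unfold Sp
  rw [← det_comm n (om * lam)]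
  have : (om • Mmat n 0) - (om * lam) • (1 : Matrix (Fin (n+1)) (Fin (n+1)) ℂ)
      = om • (Mmat n 0 - lam • 1) := by
    rw [smul_sub, smul_smul]
  rw [this, Matrix.det_smul, Fintype.card_fin]

def Nmat (n : ℕ) : Matrix (Fin (n + 1)) (Fin (n + 1)) ℝ :=
  Matrix.of fun i j =>
    if (j : ℕ) = (i : ℕ) + 1 then 0
    else if (j : ℕ) = (i : ℕ) + 2 then ((i : ℕ) + 1 : ℝ) * ((i : ℕ) + 2 : ℝ)
    else if (i : ℕ) = (j : ℕ) + 1 then (n : ℝ) - (j : ℕ)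
    else 0

lemma Nmat_map (n : ℕ) : (Nmat n).map (algebraMap ℝ ℂ) = Mmat n 0 := by
  ext i j
  simp only [Matrix.map_apply, Nmat, Mmat, Matrix.of_apply]
  split_ifs <;> simp [Complex.coe_algebraMap]

/-- There is a real polynomial `q` of degree `k = ⌊(n+1)/3⌋` with
`Sp_n(0, λ) = λ^((n+1) mod 3) · q(λ³)`; i.e. if `n+1 = 3k` then `Sp_n(0,λ) = q(λ³)`,
if `n+1 = 3k+1` then `Sp_n(0,λ) = λ·q(λ³)`, and if `n+1 = 3k+2` then
`Sp_n(0,λ) = λ²·q(λ³)`, with `deg q = k` in each case. -/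
theorem Sp_zero_cube_structure (n : ℕ) (hn : 0 < n) :
    ∃ q : Polynomial ℝ, q ≠ 0 ∧ q.natDegree = (n + 1) / 3 ∧
      ∀ lam : ℂ, Sp n 0 lam = lam ^ ((n + 1) % 3) * Polynomial.aeval (lam ^ 3) q := by
  classical
  have hr3 : (n + 1) % 3 < 3 := Nat.mod_lt _ (by norm_num)
  have hkr : 3 * ((n + 1) / 3) + (n + 1) % 3 = n + 1 := by omega
  set p : Polynomial ℝ := (Nmat n).charpoly with hp
  have hpmonic : p.Monic := Matrix.charpoly_monic _
  have hpdeg : p.natDegree = n + 1 := by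
    rw [hp, Matrix.charpoly_natDegree_eq_dim, Fintype.card_fin]
  set P : Polynomial ℂ := (Mmat n 0).charpoly with hP
  have hPmap : P = p.map (algebraMap ℝ ℂ) := by
    rw [hp, hP, ← Nmat_map n, Matrix.charpoly_map]
  have hPdeg : P.natDegree = n + 1 := by
    rw [hP, Matrix.charpoly_natDegree_eq_dim, Fintype.card_fin]
  have hSp : ∀ lam : ℂ, Sp n 0 lam = (-1 : ℂ) ^ (n + 1) * P.eval lam := by
    intro lam
    rw [hP, charpoly_eval']
    unfold Sp
    rw [show Mmat n 0 - lam • (1 : Matrix (Fin (n+1)) (Fin (n+1)) ℂ)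
        = -(lam • 1 - Mmat n 0) from (neg_sub _ _).symm]
    rw [Matrix.det_neg, Fintype.card_fin]
  have hfun : ∀ lam : ℂ, P.eval (om * lam) = om ^ (n + 1) * P.eval lam := by
    intro lam
    have h1 := Sp_funeq n lam
    rw [hSp, hSp] at h1
    have hne : ((-1 : ℂ)) ^ (n + 1) ≠ 0 := pow_ne_zero _ (by norm_num)
    apply mul_left_cancel₀ hne
    linear_combination h1
  have hcomp : P.comp (C om * X) = C (om ^ (n + 1)) * P := by
    apply Polynomial.funext
    intro x
    rw [eval_comp, eval_mul, eval_C, eval_X, eval_mul, eval_C, hfun]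
  have hcoeff : ∀ i : ℕ, i % 3 ≠ ((n + 1) % 3) → P.coeff i = 0 := by
    intro i hi
    have h1 := congrArg (fun q : Polynomial ℂ => q.coeff i) hcomp
    simp only [coeff_comp_C_mul_X, coeff_C_mul] at h1
    have h2 : P.coeff i * (om ^ i - om ^ (n + 1)) = 0 := by linear_combination h1
    rcases mul_eq_zero.mp h2 with h | h
    · exact h
    · exact absurd (sub_eq_zero.mp h) (om_pow_ne (by omega))
  have hpcoeff : ∀ i : ℕ, i % 3 ≠ ((n + 1) % 3) → p.coeff i = 0 := by
    intro i hi
    have h1 := hcoeff i hi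
    rw [hPmap, coeff_map] at h1
    exact (map_eq_zero_iff _ (algebraMap ℝ ℂ).injective).mp h1
  set s : ℝ := (-1 : ℝ) ^ (n + 1) with hs
  have hsne : s ≠ 0 := pow_ne_zero _ (by norm_num)
  set q : Polynomial ℝ := ∑ j ∈ Finset.range (((n + 1) / 3) + 1), C (s * p.coeff (3 * j + ((n + 1) % 3))) * X ^ j
    with hq
  have hqk : q.coeff ((n + 1) / 3) = s := by
    rw [hq, Polynomial.finset_sum_coeff, Finset.sum_eq_single ((n + 1) / 3)]
    · rw [coeff_C_mul, coeff_X_pow, if_pos rfl, mul_one, hkr, ← hpdeg,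
        hpmonic.coeff_natDegree, mul_one]
    · intro j _ hjk
      rw [coeff_C_mul, coeff_X_pow, if_neg (Ne.symm hjk), mul_zero]
    · intro h
      exact absurd (Finset.self_mem_range_succ ((n + 1) / 3)) h
  have hq0 : q ≠ 0 := fun h => hsne (by rw [← hqk, h, coeff_zero])
  have hqdeg : q.natDegree = ((n + 1) / 3) := by
    apply le_antisymm
    · apply Polynomial.natDegree_sum_le_of_forall_le
      intro j hj
      refine (Polynomial.natDegree_C_mul_le _ _).trans ?_
      rw [natDegree_X_pow]
      exact Nat.lt_succ_iff.mp (Finset.mem_range.mp hj)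
    · exact Polynomial.le_natDegree_of_ne_zero (by rw [hqk]; exact hsne)
  refine ⟨q, hq0, hqdeg, ?_⟩
  intro lam
  rw [hSp lam]
  have hev : P.eval lam = ∑ i ∈ Finset.range (n + 2), P.coeff i * lam ^ i :=
    Polynomial.eval_eq_sum_range' (by omega) lam
  have hfilter : ∑ i ∈ Finset.range (n + 2), P.coeff i * lam ^ i
      = ∑ i ∈ (Finset.range (n + 2)).filter (fun i => i % 3 = ((n + 1) % 3)), P.coeff i * lam ^ i := by
    rw [Finset.sum_filter_of_ne]
    intro i _ hne
    by_contra hcon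
    exact hne (by rw [hcoeff i hcon, zero_mul])
  have hbij : ∑ i ∈ (Finset.range (n + 2)).filter (fun i => i % 3 = ((n + 1) % 3)), P.coeff i * lam ^ i
      = ∑ j ∈ Finset.range (((n + 1) / 3) + 1), P.coeff (3 * j + ((n + 1) % 3)) * lam ^ (3 * j + ((n + 1) % 3)) := by
    refine Finset.sum_nbij' (fun i => i / 3) (fun j => 3 * j + ((n + 1) % 3)) ?_ ?_ ?_ ?_ ?_
    · intro a ha
      simp only [Finset.mem_filter, Finset.mem_range] at ha
      simp only [Finset.mem_range]
      omega
    · intro a ha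
      simp only [Finset.mem_range] at ha
      simp only [Finset.mem_filter, Finset.mem_range]
      omega
    · intro a ha
      simp only [Finset.mem_filter, Finset.mem_range] at ha
      show 3 * (a / 3) + (n + 1) % 3 = a
      omega
    · intro a ha
      show (3 * a + (n + 1) % 3) / 3 = a
      omega
    · intro a ha
      simp only [Finset.mem_filter, Finset.mem_range] at ha
      have h2 : 3 * (a / 3) + (n + 1) % 3 = a := by omega
      show P.coeff a * lam ^ a
        = P.coeff (3 * (a / 3) + (n + 1) % 3) * lam ^ (3 * (a / 3) + (n + 1) % 3)
      rw [h2]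
  have hPp : ∀ i : ℕ, P.coeff i = ((p.coeff i : ℝ) : ℂ) := by
    intro i
    rw [hPmap, coeff_map, Complex.coe_algebraMap]
  rw [hev, hfilter, hbij, hq, map_sum, Finset.mul_sum, Finset.mul_sum]
  refine Finset.sum_congr rfl fun j _ => ?_
  rw [hPp, _root_.map_mul, aeval_C, aeval_X_pow, hs, Complex.coe_algebraMap]
  push_cast
  ring
end
end

section
/- For every positive integer n there exist monic polynomials P_l, Q_l, R_l of degree l in one variable ξ such that, writing ξ = λ³: Δ^{(3l)}(λ) = P_l(ξ) whenever 3l ≤ n+1; Δ^{(3l+1)}(λ) = λ·Q_l(ξ) whenever 3l+1 ≤ n+1; Δ^{(3l+2)}(λ) = λ²·R_l(ξ) whenever 3l+2 ≤ n+1. Moreover P_0 = Q_0 = R_0 = 1 and for l ≥ 1 (in the admissible range) these polynomials satisfy the recurrences: P_l(ξ) = ξ·R_{l−1}(ξ) + (n−3l+2)(n−3l+3)(3l−2)(3l−1)·P_{l−1}(ξ); Q_l(ξ) = P_l(ξ) + (n−3l+1)(n−3l+2)(3l−1)(3l)·Q_{l−1}(ξ); R_l(ξ) = Q_l(ξ)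 + (n−3l)(n−3l+1)(3l)(3l+1)·R_{l−1}(ξ). -/
set_option linter.unusedTactic false
set_option linter.unnecessarySeqFocus false

/-- `Δ^{(k)}(λ)`: the determinant of the top-left `k × k` submatrix of `M_n^{(0)} + λ·Id`
(for `k ≤ n+1`; junk value `0` otherwise). In particular `Δ^{(0)}(λ) = 1`. -/
noncomputable def Delta (n k : ℕ) (lam : ℂ) : ℂ :=
  if h : k ≤ n + 1 then
    Matrix.det
      ((Mmat n 0 + lam • (1 : Matrix (Fin (n + 1)) (Fin (n + 1)) ℂ)).submatrix
        (fun i : Fin k => Fin.castLE h i) (fun j : Fin k => Fin.castLE h j))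
  else 0

/-- Entry function of `M_n^{(0)} + λ·Id` as a function of natural indices. -/
def ent (n : ℕ) (lam : ℂ) (i j : ℕ) : ℂ :=
  (if j = i + 1 then 0
    else if j = i + 2 then ((i : ℂ) + 1) * ((i : ℂ) + 2)
    else if i = j + 1 then (n : ℂ) - (j : ℂ)
    else 0) + (if i = j then lam else 0)

/-- The top-left `k × k` submatrix of `M_n^{(0)} + λ·Id`, as a matrix family. -/
def Dmat (n : ℕ) (lam : ℂ) (k : ℕ) : Matrix (Fin k) (Fin k) ℂ :=
  Matrix.of fun i j => ent n lam i j

lemma Delta_eq_det (n k : ℕ) (lam : ℂ) (h : k ≤ n + 1) :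
    Delta n k lam = (Dmat n lam k).det := by
  rw [Delta, dif_pos h]
  congr 1
  ext i j
  simp only [Matrix.submatrix_apply, Matrix.add_apply, Matrix.smul_apply, Matrix.one_apply,
    Mmat, Dmat, ent, Matrix.of_apply, Fin.coe_castLE, Fin.ext_iff, smul_eq_mul]
  split_ifs <;> ring

lemma det_Dmat_zero (n : ℕ) (lam : ℂ) : (Dmat n lam 0).det = 1 := Matrix.det_fin_zero

lemma det_Dmat_one (n : ℕ) (lam : ℂ) : (Dmat n lam 1).det = lam := by
  rw [Matrix.det_fin_one]
  simp [Dmat, ent]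

lemma det_Dmat_two (n : ℕ) (lam : ℂ) : (Dmat n lam 2).det = lam ^ 2 := by
  rw [Matrix.det_fin_two]
  simp [Dmat, ent]
  ring

lemma ent_last_row_zero (n : ℕ) (lam : ℂ) (i j : ℕ) (h2 : j ≠ i + 2) (h3 : i ≠ j + 1)
    (h4 : i ≠ j) : ent n lam i j = 0 := by
  unfold ent
  split_ifs <;> simp_all

lemma val_succAbove {m : ℕ} (p : Fin (m + 1)) (i : Fin m) :
    ((p.succAbove i : Fin (m + 1)) : ℕ) = if (i : ℕ) < (p : ℕ) then (i : ℕ) else (i : ℕ) + 1 := by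
  unfold Fin.succAbove
  split_ifs with h h2 <;> simp_all [Fin.lt_def]

/-- Intermediate minor: rows `0..k+1`, columns `0..k, k+2` of `Dmat n lam (k+3)`. -/
def M1mat (n : ℕ) (lam : ℂ) (k : ℕ) : Matrix (Fin (k + 2)) (Fin (k + 2)) ℂ :=
  Matrix.of fun i j => ent n lam (i : ℕ) (if (j : ℕ) < k + 1 then (j : ℕ) else (j : ℕ) + 1)

/-- Intermediate minor: rows `0..k-1, k+1`, columns `0..k` of `Dmat n lam (k+3)`. -/
def M2mat (n : ℕ) (lam : ℂ) (k : ℕ) : Matrix (Fin (k + 1)) (Fin (k + 1)) ℂ :=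
  Matrix.of fun i j => ent n lam (if (i : ℕ) < k then (i : ℕ) else (i : ℕ) + 1) (j : ℕ)

lemma det_M2 (n : ℕ) (lam : ℂ) (k : ℕ) :
    (M2mat n lam k).det = ((n : ℂ) - (k : ℂ)) * (Dmat n lam k).det := by
  rw [Matrix.det_succ_row (M2mat n lam k) (Fin.last k)]
  rw [Fintype.sum_eq_single (Fin.last k) (fun c hc => ?_)]
  · have he : M2mat n lam k (Fin.last k) (Fin.last k) = (n : ℂ) - (k : ℂ) := by
      show ent n lam (if k < k then k else k + 1) k = (n : ℂ) - (k : ℂ)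
      rw [if_neg (lt_irrefl k)]
      unfold ent
      split_ifs <;> first | omega | (try push_cast) <;> try ring
    have hsign : (-1 : ℂ) ^ ((Fin.last k : ℕ) + (Fin.last k : ℕ)) = 1 :=
      Even.neg_one_pow ⟨k, by simp⟩
    have hminor : (M2mat n lam k).submatrix (Fin.last k).succAbove (Fin.last k).succAbove =
        Dmat n lam k := by
      ext i j
      simp only [Matrix.submatrix_apply, Fin.succAbove_last, M2mat, Dmat, Matrix.of_apply,
        Fin.coe_castSucc]
      rw [if_pos i.isLt]
    rw [he, hsign, hminor, one_mul]
  · have he : M2mat n lam k (Fin.last k) c = 0 := by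
      have hc : (c : ℕ) ≠ k := fun h => hc (Fin.ext h)
      have hlt := c.isLt
      show ent n lam (if k < k then k else k + 1) (c : ℕ) = 0
      rw [if_neg (lt_irrefl k)]
      exact ent_last_row_zero n lam _ _ (by omega) (by omega) (by omega)
    rw [he, mul_zero, zero_mul]

lemma det_M1 (n : ℕ) (lam : ℂ) (k : ℕ) :
    (M1mat n lam k).det =
      -(((k : ℂ) + 1) * ((k : ℂ) + 2) * (((n : ℂ) - (k : ℂ)) * (Dmat n lam k).det)) := by
  rw [Matrix.det_succ_column (M1mat n lam k) (Fin.last (k + 1))]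
  rw [Fintype.sum_eq_single (⟨k, by omega⟩ : Fin (k + 2)) (fun c hc => ?_)]
  · have he : M1mat n lam k ⟨k, by omega⟩ (Fin.last (k + 1)) = ((k : ℂ) + 1) * ((k : ℂ) + 2) := by
      show ent n lam k (if k + 1 < k + 1 then k + 1 else k + 1 + 1) = _
      rw [if_neg (lt_irrefl (k + 1))]
      unfold ent
      split_ifs <;> first | omega | (try push_cast) <;> try ring
    have hsign : (-1 : ℂ) ^ (((⟨k, by omega⟩ : Fin (k + 2)) : ℕ) + (Fin.last (k + 1) : ℕ)) = -1 :=
      Odd.neg_one_pow ⟨k, by simp; ring⟩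
    have hminor : (M1mat n lam k).submatrix (⟨k, by omega⟩ : Fin (k + 2)).succAbove
        (Fin.last (k + 1)).succAbove = M2mat n lam k := by
      ext i j
      simp only [Matrix.submatrix_apply, Fin.succAbove_last, M1mat, M2mat, Matrix.of_apply,
        Fin.coe_castSucc, val_succAbove]
      rw [if_pos (show (j : ℕ) < k + 1 from j.isLt)]
    rw [he, hsign, hminor, det_M2]
    ring
  · have he : M1mat n lam k c (Fin.last (k + 1)) = 0 := by
      have hc : (c : ℕ) ≠ k := fun h => hc (Fin.ext h)
      have hlt := c.isLt
      show ent n lam (c : ℕ) (if k + 1 < k + 1 then k + 1 else k + 1 + 1) = 0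
      rw [if_neg (lt_irrefl (k + 1))]
      exact ent_last_row_zero n lam _ _ (by omega) (by omega) (by omega)
    rw [he, mul_zero, zero_mul]

lemma det_Dmat_rec (n : ℕ) (lam : ℂ) (k : ℕ) :
    (Dmat n lam (k + 3)).det =
      lam * (Dmat n lam (k + 2)).det +
        ((n : ℂ) - (k : ℂ) - 1) * ((n : ℂ) - (k : ℂ)) * ((k : ℂ) + 1) * ((k : ℂ) + 2) *
          (Dmat n lam k).det := by
  rw [Matrix.det_succ_row (Dmat n lam (k + 3)) (Fin.last (k + 2))]
  rw [Fintype.sum_eq_add (⟨k + 1, by omega⟩ : Fin (k + 3)) (Fin.last (k + 2))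
    (by simp [Fin.ext_iff]) (fun c hc => ?_)]
  · have he1 : Dmat n lam (k + 3) (Fin.last (k + 2)) ⟨k + 1, by omega⟩ =
        (n : ℂ) - ((k : ℂ) + 1) := by
      show ent n lam (k + 2) (k + 1) = _
      unfold ent
      split_ifs <;> first | omega | (try push_cast) <;> try ring
    have he2 : Dmat n lam (k + 3) (Fin.last (k + 2)) (Fin.last (k + 2)) = lam := by
      show ent n lam (k + 2) (k + 2) = lam
      unfold ent
      split_ifs <;> first | omega | (try push_cast) <;> try ring
    have hsign1 : (-1 : ℂ) ^ ((Fin.last (k + 2) : ℕ) + ((⟨k + 1, by omega⟩ : Fin (k + 3)) : ℕ))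
        = -1 := Odd.neg_one_pow ⟨k + 1, by simp; ring⟩
    have hsign2 : (-1 : ℂ) ^ ((Fin.last (k + 2) : ℕ) + (Fin.last (k + 2) : ℕ)) = 1 :=
      Even.neg_one_pow ⟨k + 2, by simp⟩
    have hminor2 : (Dmat n lam (k + 3)).submatrix (Fin.last (k + 2)).succAbove
        (Fin.last (k + 2)).succAbove = Dmat n lam (k + 2) := by
      ext i j
      simp only [Matrix.submatrix_apply, Fin.succAbove_last, Dmat, Matrix.of_apply,
        Fin.coe_castSucc]
    have hminor1 : (Dmat n lam (k + 3)).submatrix (Fin.last (k + 2)).succAbove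
        (⟨k + 1, by omega⟩ : Fin (k + 3)).succAbove = M1mat n lam k := by
      ext i j
      simp only [Matrix.submatrix_apply, Fin.succAbove_last, Dmat, M1mat, Matrix.of_apply,
        Fin.coe_castSucc, val_succAbove]
    rw [he1, he2, hsign1, hsign2, hminor1, hminor2, det_M1]
    ring
  · have he : Dmat n lam (k + 3) (Fin.last (k + 2)) c = 0 := by
      have hc1 : (c : ℕ) ≠ k + 1 := fun h => hc.1 (Fin.ext h)
      have hc2 : (c : ℕ) ≠ k + 2 := fun h => hc.2 (Fin.ext h)
      have hlt := c.isLt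
      show ent n lam (k + 2) (c : ℕ) = 0
      exact ent_last_row_zero n lam _ _ (by omega) (by omega) (by omega)
    rw [he, mul_zero, zero_mul]

noncomputable def PQR (n : ℕ) : ℕ → Polynomial ℝ × Polynomial ℝ × Polynomial ℝ
  | 0 => (1, 1, 1)
  | l + 1 =>
    let t := PQR n l
    let P := Polynomial.X * t.2.2 +
      Polynomial.C (((n : ℝ) - 3 * ((l : ℝ) + 1) + 2) * ((n : ℝ) - 3 * ((l : ℝ) + 1) + 3) *
        (3 * ((l : ℝ) + 1) - 2) * (3 * ((l : ℝ) + 1) - 1)) * t.1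
    let Q := P +
      Polynomial.C (((n : ℝ) - 3 * ((l : ℝ) + 1) + 1) * ((n : ℝ) - 3 * ((l : ℝ) + 1) + 2) *
        (3 * ((l : ℝ) + 1) - 1) * (3 * ((l : ℝ) + 1))) * t.2.1
    let R := Q +
      Polynomial.C (((n : ℝ) - 3 * ((l : ℝ) + 1)) * ((n : ℝ) - 3 * ((l : ℝ) + 1) + 1) *
        (3 * ((l : ℝ) + 1)) * (3 * ((l : ℝ) + 1) + 1)) * t.2.2
    (P, Q, R)


open Polynomial in
private lemma degC_mul_le (a : ℝ) (p : Polynomial ℝ) : (C a * p).degree ≤ p.degree :=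
  (degree_mul_le _ _).trans (by simpa using add_le_add degree_C_le (le_refl p.degree))

open Polynomial in
private lemma monic_step (a : ℝ) (p q : Polynomial ℝ) (l : ℕ) (hq : q.Monic)
    (hql : q.natDegree = l + 1) (hp : p.Monic) (hpl : p.natDegree = l) :
    (q + C a * p).Monic ∧ (q + C a * p).natDegree = l + 1 := by
  have hd : (C a * p).degree < q.degree := by
    refine lt_of_le_of_lt (degC_mul_le a p) ?_
    rw [Polynomial.degree_eq_natDegree hp.ne_zero, Polynomial.degree_eq_natDegree hq.ne_zero,
      hpl, hql]
    exact_mod_cast Nat.lt_succ_self l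
  exact ⟨hq.add_of_left hd, by rw [natDegree_add_eq_left_of_degree_lt hd, hql]⟩


open Polynomial in
private lemma triple_step (a b c : ℝ) (p q r : Polynomial ℝ) (m : ℕ)
    (hpm : p.Monic) (hpd : p.natDegree = m) (hqm : q.Monic) (hqd : q.natDegree = m)
    (hrm : r.Monic) (hrd : r.natDegree = m) :
    ((X * r + C a * p).Monic ∧ (X * r + C a * p).natDegree = m + 1) ∧
    (((X * r + C a * p) + C b * q).Monic ∧
      ((X * r + C a * p) + C b * q).natDegree = m + 1) ∧
    ((((X * r + C a * p) + C b * q) + C c * r).Monic ∧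
      (((X * r + C a * p) + C b * q) + C c * r).natDegree = m + 1) := by
  have hXR : (X * r).Monic := monic_X.mul hrm
  have hXRd : (X * r).natDegree = m + 1 := by
    rw [Polynomial.natDegree_mul Polynomial.X_ne_zero hrm.ne_zero,
      Polynomial.natDegree_X, hrd, add_comm]
  have hP := monic_step a p (X * r) m hXR hXRd hpm hpd
  have hQ := monic_step b q _ m hP.1 hP.2 hqm hqd
  have hR := monic_step c r _ m hQ.1 hQ.2 hrm hrd
  exact ⟨hP, hQ, hR⟩

lemma PQR_monic (n : ℕ) (l : ℕ) :
    ((PQR n l).1.Monic ∧ (PQR n l).1.natDegree = l) ∧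
    ((PQR n l).2.1.Monic ∧ (PQR n l).2.1.natDegree = l) ∧
    ((PQR n l).2.2.Monic ∧ (PQR n l).2.2.natDegree = l) := by
  induction l with
  | zero =>
    refine ⟨⟨Polynomial.monic_one, ?_⟩, ⟨Polynomial.monic_one, ?_⟩, ⟨Polynomial.monic_one, ?_⟩⟩ <;>
      simp [PQR]
  | succ m ih =>
    obtain ⟨⟨hPm, hPd⟩, ⟨hQm, hQd⟩, ⟨hRm, hRd⟩⟩ := ih
    simp only [PQR]
    exact triple_step _ _ _ _ _ _ m hPm hPd hQm hQd hRm hRd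


lemma key_eval (n : ℕ) (hn : 0 < n) (l : ℕ) :
    (3 * l ≤ n + 1 → ∀ lam : ℂ,
      Delta n (3 * l) lam = Polynomial.aeval (lam ^ 3) (PQR n l).1) ∧
    (3 * l + 1 ≤ n + 1 → ∀ lam : ℂ,
      Delta n (3 * l + 1) lam = lam * Polynomial.aeval (lam ^ 3) (PQR n l).2.1) ∧
    (3 * l + 2 ≤ n + 1 → ∀ lam : ℂ,
      Delta n (3 * l + 2) lam = lam ^ 2 * Polynomial.aeval (lam ^ 3) (PQR n l).2.2) := by
  induction l with
  | zero =>
    refine ⟨fun h lam => ?_, fun h lam => ?_, fun h lam => ?_⟩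
    · rw [Delta_eq_det n _ lam (by omega)]
      simp [PQR, det_Dmat_zero]
    · rw [Delta_eq_det n _ lam (by omega)]
      simp [PQR, det_Dmat_one, Dmat, ent]
    · rw [Delta_eq_det n _ lam (by omega)]
      simp [PQR, det_Dmat_two]
  | succ m ih =>
    obtain ⟨ihP, ihQ, ihR⟩ := ih
    have hP : 3 * (m + 1) ≤ n + 1 → ∀ lam : ℂ,
        Delta n (3 * (m + 1)) lam = Polynomial.aeval (lam ^ 3) (PQR n (m + 1)).1 := by
      intro h lam
      have e3 : 3 * (m + 1) = 3 * m + 3 := by ring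
      rw [e3, Delta_eq_det n _ lam (by omega), det_Dmat_rec,
        ← Delta_eq_det n _ lam (by omega), ← Delta_eq_det n _ lam (by omega),
        ihR (by omega) lam, ihP (by omega) lam]
      simp only [PQR, map_add, map_mul, Polynomial.aeval_X, Polynomial.aeval_C,
        Complex.coe_algebraMap, Complex.ofReal_mul, Complex.ofReal_add, Complex.ofReal_sub,
        Complex.ofReal_one, Complex.ofReal_ofNat, Complex.ofReal_natCast]
      push_cast
      ring
    have hQ : 3 * (m + 1) + 1 ≤ n + 1 → ∀ lam : ℂ,
        Delta n (3 * (m + 1) + 1) lam = lam * Polynomial.aeval (lam ^ 3) (PQR n (m + 1)).2.1 := by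
      intro h lam
      have e3 : 3 * (m + 1) + 1 = (3 * m + 1) + 3 := by ring
      rw [e3, Delta_eq_det n _ lam (by omega), det_Dmat_rec,
        ← Delta_eq_det n _ lam (by omega), ← Delta_eq_det n _ lam (by omega)]
      have e4 : 3 * m + 1 + 2 = 3 * (m + 1) := by ring
      rw [e4, hP (by omega) lam, ihQ (by omega) lam]
      simp only [PQR, map_add, map_mul, Polynomial.aeval_X, Polynomial.aeval_C,
        Complex.coe_algebraMap, Complex.ofReal_mul, Complex.ofReal_add, Complex.ofReal_sub,
        Complex.ofReal_one, Complex.ofReal_ofNat, Complex.ofReal_natCast]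
      push_cast
      ring
    have hR : 3 * (m + 1) + 2 ≤ n + 1 → ∀ lam : ℂ,
        Delta n (3 * (m + 1) + 2) lam =
          lam ^ 2 * Polynomial.aeval (lam ^ 3) (PQR n (m + 1)).2.2 := by
      intro h lam
      have e3 : 3 * (m + 1) + 2 = (3 * m + 2) + 3 := by ring
      rw [e3, Delta_eq_det n _ lam (by omega), det_Dmat_rec,
        ← Delta_eq_det n _ lam (by omega), ← Delta_eq_det n _ lam (by omega)]
      have e4 : 3 * m + 2 + 2 = 3 * (m + 1) + 1 := by ring
      rw [e4, hQ (by omega) lam, ihR (by omega) lam]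
      simp only [PQR, map_add, map_mul, Polynomial.aeval_X, Polynomial.aeval_C,
        Complex.coe_algebraMap, Complex.ofReal_mul, Complex.ofReal_add, Complex.ofReal_sub,
        Complex.ofReal_one, Complex.ofReal_ofNat, Complex.ofReal_natCast]
      push_cast
      ring
    exact ⟨hP, hQ, hR⟩

/-- The minors `Δ^{(3l)}, Δ^{(3l+1)}, Δ^{(3l+2)}` of `M_n^{(0)} + λ·Id` are of the form
`P_l(λ³)`, `λ·Q_l(λ³)`, `λ²·R_l(λ³)` for monic real polynomials `P_l, Q_l, R_l` of degree
`l` satisfying the stated three-term recurrences, with `P₀ = Q₀ = R₀ = 1`. -/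
theorem Delta_PQR_structure (n : ℕ) (hn : 0 < n) :
    ∃ P Q R : ℕ → Polynomial ℝ,
      P 0 = 1 ∧ Q 0 = 1 ∧ R 0 = 1 ∧
      (∀ l : ℕ, 3 * l ≤ n + 1 →
        (P l).Monic ∧ (P l).natDegree = l ∧
          ∀ lam : ℂ, Delta n (3 * l) lam = Polynomial.aeval (lam ^ 3) (P l)) ∧
      (∀ l : ℕ, 3 * l + 1 ≤ n + 1 →
        (Q l).Monic ∧ (Q l).natDegree = l ∧
          ∀ lam : ℂ, Delta n (3 * l + 1) lam = lam * Polynomial.aeval (lam ^ 3) (Q l)) ∧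
      (∀ l : ℕ, 3 * l + 2 ≤ n + 1 →
        (R l).Monic ∧ (R l).natDegree = l ∧
          ∀ lam : ℂ, Delta n (3 * l + 2) lam = lam ^ 2 * Polynomial.aeval (lam ^ 3) (R l)) ∧
      (∀ l : ℕ, 1 ≤ l → 3 * l ≤ n + 1 →
        P l = Polynomial.X * R (l - 1) +
          Polynomial.C (((n : ℝ) - 3 * l + 2) * ((n : ℝ) - 3 * l + 3) *
            (3 * (l : ℝ) - 2) * (3 * (l : ℝ) - 1)) * P (l - 1)) ∧
      (∀ l : ℕ, 1 ≤ l → 3 * l + 1 ≤ n + 1 →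
        Q l = P l +
          Polynomial.C (((n : ℝ) - 3 * l + 1) * ((n : ℝ) - 3 * l + 2) *
            (3 * (l : ℝ) - 1) * (3 * (l : ℝ))) * Q (l - 1)) ∧
      (∀ l : ℕ, 1 ≤ l → 3 * l + 2 ≤ n + 1 →
        R l = Q l +
          Polynomial.C (((n : ℝ) - 3 * l) * ((n : ℝ) - 3 * l + 1) *
            (3 * (l : ℝ)) * (3 * (l : ℝ) + 1)) * R (l - 1)) := by
  refine ⟨fun l => (PQR n l).1, fun l => (PQR n l).2.1, fun l => (PQR n l).2.2,
    rfl, rfl, rfl, ?_, ?_, ?_, ?_, ?_, ?_⟩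
  · intro l hl
    exact ⟨(PQR_monic n l).1.1, (PQR_monic n l).1.2, (key_eval n hn l).1 hl⟩
  · intro l hl
    exact ⟨(PQR_monic n l).2.1.1, (PQR_monic n l).2.1.2, (key_eval n hn l).2.1 hl⟩
  · intro l hl
    exact ⟨(PQR_monic n l).2.2.1, (PQR_monic n l).2.2.2, (key_eval n hn l).2.2 hl⟩
  · rintro (_ | m) hl _
    · omega
    · simp only [PQR, Nat.add_sub_cancel]
      congr 2
      push_cast
      ring
  · rintro (_ | m) hl _
    · omega
    · simp only [PQR, Nat.add_sub_cancel]
      congr 2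
      push_cast
      ring
  · rintro (_ | m) hl _
    · omega
    · simp only [PQR, Nat.add_sub_cancel]
      congr 2
      push_cast
      ring
end

section
/- For every positive integer n, the bivariate polynomial Sp_n(a,λ) has total degree n+1; its degree in the variable λ equals n+1, with leading coefficient (−1)^{n+1}; and its degree in the variable a equals ⌊(n+1)/2⌋. -/
open MvPolynomial

/-- The matrix `M_n^{(a)} - λ·Id` with `a` and `λ` as indeterminates: an
`(n+1) × (n+1)` matrix over the polynomial ring `ℂ[a, λ]`, where `X 0 = a` and
`X 1 = λ`. -/
noncomputable def MmatMv (n : ℕ) : Matrix (Fin (n + 1)) (Fin (n + 1)) (MvPolynomial (Fin 2) ℂ) :=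
  Matrix.of fun i j =>
    if (j : ℕ) = (i : ℕ) + 1 then (((i : ℕ) + 1 : ℕ) : MvPolynomial (Fin 2) ℂ) * X 0
    else if (j : ℕ) = (i : ℕ) + 2 then
      ((((i : ℕ) + 1) * ((i : ℕ) + 2) : ℕ) : MvPolynomial (Fin 2) ℂ)
    else if (i : ℕ) = (j : ℕ) + 1 then ((n - (j : ℕ) : ℕ) : MvPolynomial (Fin 2) ℂ)
    else 0

/-- `Sp_n(a, λ) = det (M_n^{(a)} - λ·Id)` as a bivariate polynomial in `a = X 0`
and `λ = X 1`. -/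
noncomputable def SpMv (n : ℕ) : MvPolynomial (Fin 2) ℂ :=
  Matrix.det
    (MmatMv n - (X 1 : MvPolynomial (Fin 2) ℂ) •
      (1 : Matrix (Fin (n + 1)) (Fin (n + 1)) (MvPolynomial (Fin 2) ℂ)))

/-!
Let `P m` be the determinant of the leading `m × m` block of `M_n^{(a)} - λ Id`. The matrix is
upper Hessenberg with two superdiagonals, so expanding along the first column (after reversing
the order of rows and columns) gives
`P (k + 2) = -λ P (k + 1) - (n - k)(k + 1) a P k + (n - k)(n + 1 - k) k (k + 1) P (k - 1)`,
and `Sp_n = P (n + 1)`. By induction, `P m` has total degree `≤ m` with `λ^m`-coefficient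
`(-1)^m`, and `a`-degree `≤ m / 2`. For `m ≤ n + 1` the coefficient of `a^(m / 2) λ^(m % 2)` is
`±` a positive integer: the first two terms of the recurrence contribute to it with the same
sign, the coefficients `(n - k)(k + 1)` are positive for `k < n`, and the last term has too small
an `a`-degree to contribute.
-/

namespace MvPolynomial

variable {R σ : Type*} [CommSemiring R]

theorem totalDegree_C_mul_le (c : R) (p : MvPolynomial σ R) :
    (C c * p).totalDegree ≤ p.totalDegree :=
  (totalDegree_mul _ _).trans_eq (by rw [totalDegree_C, zero_add])

theorem totalDegree_mul_X_le [Nontrivial R] (p : MvPolynomial σ R) (i : σ) :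
    (p * X i).totalDegree ≤ p.totalDegree + 1 :=
  (totalDegree_mul _ _).trans_eq (by rw [totalDegree_X])

theorem le_degreeOf_of_coeff_ne_zero {p : MvPolynomial σ R} {μ : σ →₀ ℕ} (h : coeff μ p ≠ 0)
    (i : σ) : μ i ≤ p.degreeOf i :=
  monomial_le_degreeOf i (mem_support_iff.mpr h)

theorem coeff_eq_zero_of_degreeOf_lt {p : MvPolynomial σ R} {i : σ} {μ : σ →₀ ℕ}
    (h : p.degreeOf i < μ i) : coeff μ p = 0 :=
  of_not_not fun hμ => (le_degreeOf_of_coeff_ne_zero hμ i).not_gt h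

end MvPolynomial

namespace Matrix

variable {R : Type*} [CommRing R]

theorem det_succ_succ_of_col_zero_eq_zero {k : ℕ} (A : Matrix (Fin (k + 2)) (Fin (k + 2)) R)
    (h : ∀ i : Fin k, A i.succ.succ 0 = 0) :
    A.det = A 0 0 * (A.submatrix Fin.succ Fin.succ).det
      - A 1 0 * (A.submatrix (Fin.succAbove 1) Fin.succ).det := by
  simp [det_succ_column_zero A, Fin.sum_univ_succ (n := k + 1), Fin.sum_univ_succ (n := k),
    h, sub_eq_add_neg]

theorem det_succ_of_row_zero_eq_zero {k : ℕ} (A : Matrix (Fin (k + 1)) (Fin (k + 1)) R)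
    (h : ∀ j : Fin k, A 0 j.succ = 0) :
    A.det = A 0 0 * (A.submatrix Fin.succ Fin.succ).det := by
  simp [det_succ_row_zero A, Fin.sum_univ_succ (n := k), h]

theorem det_of_band {k : ℕ} (A : Matrix (Fin (k + 3)) (Fin (k + 3)) R)
    (hA : ∀ i j : Fin (k + 3), (j : ℕ) + 1 < i ∨ (i : ℕ) + 2 < j → A i j = 0) :
    A.det = A 0 0 * (A.submatrix Fin.succ Fin.succ).det
      - A 1 0 * A 0 1 * ((A.submatrix Fin.succ Fin.succ).submatrix Fin.succ Fin.succ).det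
      + A 1 0 * A 2 1 * A 0 2 *
        (((A.submatrix Fin.succ Fin.succ).submatrix Fin.succ Fin.succ).submatrix
          Fin.succ Fin.succ).det := by
  set C := A.submatrix (Fin.succAbove 1) Fin.succ
  set D := C.submatrix (Fin.succAbove 1) Fin.succ
  have hA₀ : ∀ i : Fin (k + 1), A i.succ.succ 0 = 0 := fun i => hA _ _ (by simp)
  have hC₀ : ∀ i : Fin k, C i.succ.succ 0 = 0 := fun i => hA _ _ (by simp [Fin.succAbove])
  have hD₀ : ∀ j : Fin k, D 0 j.succ = 0 := fun j => hA _ _ (by simp [Fin.succAbove])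
  rw [det_succ_succ_of_col_zero_eq_zero A hA₀, det_succ_succ_of_col_zero_eq_zero C hC₀,
    det_succ_of_row_zero_eq_zero D hD₀]
  have hC : C 0 0 = A 0 1 ∧ C 1 0 = A 2 1 := ⟨rfl, rfl⟩
  have hD : D 0 0 = A 0 2 := rfl
  have hCs : C.submatrix Fin.succ Fin.succ =
      (A.submatrix Fin.succ Fin.succ).submatrix Fin.succ Fin.succ := rfl
  have hDs : D.submatrix Fin.succ Fin.succ =
      ((A.submatrix Fin.succ Fin.succ).submatrix Fin.succ Fin.succ).submatrix Fin.succ Fin.succ :=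
    rfl
  rw [hC.1, hC.2, hD, hCs, hDs]
  ring

end Matrix

/-- The exponent of `a ^ (m / 2) * λ ^ (m % 2)`, the leading `a`-monomial of `spSeq m`. -/
noncomputable def aLeadExp (m : ℕ) : Fin 2 →₀ ℕ :=
  Finsupp.single 0 (m / 2) + Finsupp.single 1 (m % 2)

theorem aLeadExp_apply_zero (m : ℕ) : aLeadExp m 0 = m / 2 := by
  simp [aLeadExp]

theorem aLeadExp_apply_one_of_even {m : ℕ} (hm : Even m) : aLeadExp m 1 = 0 := by
  simp [aLeadExp, Nat.even_iff.mp hm]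

theorem aLeadExp_add_two (m : ℕ) : aLeadExp (m + 2) = aLeadExp m + Finsupp.single 0 1 := by
  ext i
  fin_cases i <;> simp [aLeadExp]

theorem aLeadExp_add_two_of_odd {m : ℕ} (hm : Odd m) :
    aLeadExp (m + 2) = aLeadExp (m + 1) + Finsupp.single 1 1 := by
  obtain ⟨t, rfl⟩ := hm
  ext i
  fin_cases i <;> simp [aLeadExp] <;> omega

section SpSeq

variable (R : Type*) [CommRing R] (α β : ℕ → ℕ)

/-- The recurrence for `P`, with arbitrary coefficients `α k`, `β k`; at `k = 0` its last term
reads `β 0 * spSeq 0` (truncated subtraction). -/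
noncomputable def spSeq : ℕ → MvPolynomial (Fin 2) R
  | 0 => 1
  | 1 => -X 1
  | k + 2 =>
    -(spSeq (k + 1) * X 1) - C (α k : R) * (spSeq k * X 0) + C (β k : R) * spSeq (k - 1)

theorem spSeq_add_two (k : ℕ) : spSeq R α β (k + 2) =
    -(spSeq R α β (k + 1) * X 1) - C (α k : R) * (spSeq R α β k * X 0)
      + C (β k : R) * spSeq R α β (k - 1) := by
  rw [spSeq]

variable {R}

theorem totalDegree_spSeq_le [Nontrivial R] (m : ℕ) : (spSeq R α β m).totalDegree ≤ m := by
  induction m using Nat.strong_induction_on with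
  | _ m ih =>
  match m with
  | 0 => simp [spSeq]
  | 1 => simp [spSeq]
  | k + 2 =>
    have h₁ := ih (k + 1) (by omega)
    have h₀ := ih k (by omega)
    have h := ih (k - 1) (by omega)
    rw [spSeq_add_two]
    refine (totalDegree_add _ _).trans (max_le ((totalDegree_sub _ _).trans (max_le ?_ ?_)) ?_)
    · rw [totalDegree_neg]
      exact (totalDegree_mul_X_le _ _).trans (by omega)
    · exact (totalDegree_C_mul_le _ _).trans ((totalDegree_mul_X_le _ _).trans (by omega))
    · exact (totalDegree_C_mul_le _ _).trans (by omega)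

theorem degreeOf_zero_spSeq_le (m : ℕ) : (spSeq R α β m).degreeOf 0 ≤ m / 2 := by
  induction m using Nat.strong_induction_on with
  | _ m ih =>
  match m with
  | 0 => simp [spSeq]
  | 1 => simp [spSeq, degreeOf_neg, degreeOf_X_of_ne]
  | k + 2 =>
    have h₁ := ih (k + 1) (by omega)
    have h₀ := ih k (by omega)
    have h := ih (k - 1) (by omega)
    rw [spSeq_add_two]
    refine (degreeOf_add_le _ _ _).trans
      (max_le ((degreeOf_sub_le _ _ _).trans (max_le ?_ ?_)) ?_)
    · rw [degreeOf_neg, degreeOf_mul_X_of_ne _ (by decide)]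
      omega
    · exact (degreeOf_C_mul_le _ _ _).trans ((degreeOf_mul_X_self _ _).trans (by omega))
    · exact (degreeOf_C_mul_le _ _ _).trans (by omega)

theorem coeff_spSeq_single_one [Nontrivial R] (m : ℕ) :
    coeff (Finsupp.single 1 m) (spSeq R α β m) = (-1) ^ m := by
  induction m using Nat.strong_induction_on with
  | _ m ih =>
  match m with
  | 0 => simp [spSeq]
  | 1 => simp [spSeq]
  | k + 2 =>
    have hX₁ : coeff (Finsupp.single 1 (k + 2)) (spSeq R α β (k + 1) * X 1) =
        (-1) ^ (k + 1) := by
      rw [← ih (k + 1) (by omega), show k + 2 = k + 1 + 1 from rfl, Finsupp.single_add,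
        coeff_mul_X]
    have hX₀ : coeff (Finsupp.single 1 (k + 2)) (spSeq R α β k * X 0) = 0 := by
      rw [coeff_mul_X', if_neg (by simp)]
    have hlow : coeff (Finsupp.single 1 (k + 2)) (spSeq R α β (k - 1)) = 0 := by
      refine coeff_eq_zero_of_totalDegree_lt <| (totalDegree_spSeq_le α β _).trans_lt ?_
      rw [Finsupp.support_single _ (by omega), Finset.sum_singleton, Finsupp.single_eq_same]
      omega
    rw [spSeq_add_two, coeff_add, coeff_sub, coeff_neg, coeff_C_mul, coeff_C_mul, hX₁, hX₀,
      hlow]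
    ring

theorem coeff_spSeq_aLeadExp (m : ℕ) (hα : ∀ k, k + 2 ≤ m → 0 < α k) :
    ∃ c : ℕ, 0 < c ∧ coeff (aLeadExp m) (spSeq R α β m) = (-1) ^ ((m + 1) / 2) * c := by
  induction m using Nat.strong_induction_on with
  | _ m ih =>
  match m with
  | 0 => exact ⟨1, one_pos, by simp [aLeadExp, spSeq]⟩
  | 1 => exact ⟨1, one_pos, by simp [aLeadExp, spSeq]⟩
  | k + 2 =>
    obtain ⟨c₀, hc₀, h₀⟩ := ih k (by omega) fun j hj => hα j (by omega)
    have hX₀ : coeff (aLeadExp (k + 2)) (spSeq R α β k * X 0) =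
        (-1) ^ ((k + 1) / 2) * (c₀ : R) := by
      rw [aLeadExp_add_two, coeff_mul_X, h₀]
    have hlow : coeff (aLeadExp (k + 2)) (spSeq R α β (k - 1)) = 0 := by
      refine coeff_eq_zero_of_degreeOf_lt ((degreeOf_zero_spSeq_le α β _).trans_lt ?_)
      rw [aLeadExp_apply_zero]
      omega
    have hsign : (k + 2 + 1) / 2 = (k + 1) / 2 + 1 := by omega
    have hpos : 0 < α k := hα k le_rfl
    rcases Nat.even_or_odd k with hk | hk
    · have hX₁ : coeff (aLeadExp (k + 2)) (spSeq R α β (k + 1) * X 1) = 0 := by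
        rw [coeff_mul_X', if_neg (by simpa using aLeadExp_apply_one_of_even (hk.add even_two))]
      refine ⟨α k * c₀, by positivity, ?_⟩
      rw [spSeq_add_two, coeff_add, coeff_sub, coeff_neg, coeff_C_mul, coeff_C_mul, hX₁, hX₀,
        hlow, hsign]
      push_cast
      ring
    · obtain ⟨c₁, hc₁, h₁⟩ := ih (k + 1) (by omega) fun j hj => hα j (by omega)
      have hX₁ : coeff (aLeadExp (k + 2)) (spSeq R α β (k + 1) * X 1) =
          (-1) ^ ((k + 1) / 2) * (c₁ : R) := by
        rw [aLeadExp_add_two_of_odd hk, coeff_mul_X, h₁, show (k + 1 + 1) / 2 = (k + 1) / 2 by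
          obtain ⟨t, rfl⟩ := hk; omega]
      refine ⟨c₁ + α k * c₀, by positivity, ?_⟩
      rw [spSeq_add_two, coeff_add, coeff_sub, coeff_neg, coeff_C_mul, coeff_C_mul, hX₁, hX₀,
        hlow, hsign]
      push_cast
      ring

end SpSeq

/-- Entry `(r, c)` of `M_n^{(a)} - λ Id`, with `0`-based indices. -/
noncomputable def spEntry (n r c : ℕ) : MvPolynomial (Fin 2) ℂ :=
  if c = r + 1 then ((r + 1 : ℕ) : MvPolynomial (Fin 2) ℂ) * X 0
  else if c = r + 2 then (((r + 1) * (r + 2) : ℕ) : MvPolynomial (Fin 2) ℂ)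
  else if r = c + 1 then ((n - c : ℕ) : MvPolynomial (Fin 2) ℂ)
  else if r = c then -X 1
  else 0

theorem spEntry_self (n r : ℕ) : spEntry n r r = -X 1 := by
  simp [spEntry]

theorem spEntry_succ_self (n c : ℕ) :
    spEntry n (c + 1) c = ((n - c : ℕ) : MvPolynomial (Fin 2) ℂ) := by
  rw [spEntry, if_neg (by omega), if_neg (by omega), if_pos rfl]

theorem spEntry_self_succ (n r : ℕ) :
    spEntry n r (r + 1) = ((r + 1 : ℕ) : MvPolynomial (Fin 2) ℂ) * X 0 := by
  simp [spEntry]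

theorem spEntry_self_add_two (n r : ℕ) :
    spEntry n r (r + 2) = (((r + 1) * (r + 2) : ℕ) : MvPolynomial (Fin 2) ℂ) := by
  simp [spEntry]

/-- The leading `m × m` block of `M_n^{(a)} - λ Id`, transposed and with the order of rows and
columns reversed. In this form `spMinor n m` is the trailing block of `spMinor n (m + 1)`. -/
noncomputable def spMinor (n m : ℕ) : Matrix (Fin m) (Fin m) (MvPolynomial (Fin 2) ℂ) :=
  Matrix.of fun i j => spEntry n (m - 1 - j) (m - 1 - i)

theorem SpMv_eq_det_spMinor (n : ℕ) : SpMv n = (spMinor n (n + 1)).det := by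
  have h : spMinor n (n + 1) =
      (MmatMv n - (X 1 : MvPolynomial (Fin 2) ℂ) • 1).transpose.submatrix Fin.revPerm
        Fin.revPerm := by
    refine Matrix.ext fun i j => ?_
    simp only [spMinor, spEntry, MmatMv, Matrix.of_apply, Matrix.submatrix_apply,
      Matrix.transpose_apply, Matrix.sub_apply, Matrix.smul_apply, Matrix.one_apply,
      Fin.revPerm_apply, Fin.val_rev, Fin.ext_iff, smul_eq_mul]
    split_ifs <;> first | ring1 | omega | (push_cast; ring1)
  rw [SpMv, ← Matrix.det_transpose, ← Matrix.det_submatrix_equiv_self Fin.revPerm, h]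

theorem spMinor_submatrix_succ (n m : ℕ) :
    (spMinor n (m + 1)).submatrix Fin.succ Fin.succ = spMinor n m := by
  refine Matrix.ext fun i j => ?_
  simp only [spMinor, Matrix.submatrix_apply, Matrix.of_apply, Fin.val_succ]
  rw [show m + 1 - 1 - (j + 1) = m - 1 - j by omega,
    show m + 1 - 1 - (i + 1) = m - 1 - i by omega]

theorem det_spMinor (n m : ℕ) : (spMinor n m).det =
    spSeq ℂ (fun k => (n - k) * (k + 1)) (fun k => (n - k) * (n + 1 - k) * k * (k + 1)) m := by
  induction m using Nat.strong_induction_on with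
  | _ m ih =>
  match m with
  | 0 => simp [spSeq]
  | 1 => simp [spSeq, spMinor, spEntry_self]
  | 2 =>
    rw [Matrix.det_fin_two, spSeq_add_two]
    simp [spSeq, spMinor, spEntry_self, spEntry_self_succ, spEntry_succ_self]
    ring
  | k + 3 =>
    have hband : ∀ i j : Fin (k + 3), (j : ℕ) + 1 < i ∨ (i : ℕ) + 2 < j →
        spMinor n (k + 3) i j = 0 := by
      intro i j h
      simp only [spMinor, spEntry, Matrix.of_apply]
      split_ifs <;> first | rfl | omega
    have entry (i j : Fin (k + 3)) :
        spMinor n (k + 3) i j = spEntry n (k + 2 - j) (k + 2 - i) := rfl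
    rw [Matrix.det_of_band _ hband, spMinor_submatrix_succ, spMinor_submatrix_succ,
      spMinor_submatrix_succ, ih (k + 2) (by omega), ih (k + 1) (by omega), ih k (by omega),
      spSeq_add_two _ _ _ (k + 1), entry, entry, entry, entry, entry]
    simp only [Fin.val_zero, Fin.val_one, Fin.val_two, Nat.sub_zero,
      show k + 2 - 1 = k + 1 by omega, show k + 2 - 2 = k by omega,
      show n + 1 - (k + 1) = n - k by omega,
      spEntry_self, spEntry_succ_self, spEntry_self_succ, spEntry_self_add_two, map_natCast]
    push_cast
    ring

theorem SpMv_degrees_general (n : ℕ) :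
    (SpMv n).totalDegree = n + 1 ∧
    (SpMv n).degreeOf 1 = n + 1 ∧
    MvPolynomial.coeff (Finsupp.single 1 (n + 1)) (SpMv n) = (-1) ^ (n + 1) ∧
    (SpMv n).degreeOf 0 = (n + 1) / 2 := by
  rw [SpMv_eq_det_spMinor, det_spMinor]
  set α : ℕ → ℕ := fun k => (n - k) * (k + 1)
  set β : ℕ → ℕ := fun k => (n - k) * (n + 1 - k) * k * (k + 1)
  have htotal := totalDegree_spSeq_le (R := ℂ) α β (n + 1)
  have hlead₁ := coeff_spSeq_single_one (R := ℂ) α β (n + 1)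
  obtain ⟨c, hc, hlead₀⟩ := coeff_spSeq_aLeadExp (R := ℂ) α β (n + 1)
    fun k hk => Nat.mul_pos (by omega) k.succ_pos
  have hdeg₁ : n + 1 ≤ (spSeq ℂ α β (n + 1)).degreeOf 1 := by
    have h := le_degreeOf_of_coeff_ne_zero (hlead₁ ▸ pow_ne_zero _ (by norm_num)) 1
    rwa [Finsupp.single_eq_same] at h
  have hdeg₀ : (n + 1) / 2 ≤ (spSeq ℂ α β (n + 1)).degreeOf 0 := by
    have h := le_degreeOf_of_coeff_ne_zero
      (hlead₀ ▸ mul_ne_zero (pow_ne_zero _ (by norm_num)) (Nat.cast_ne_zero.mpr hc.ne')) 0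
    rwa [aLeadExp_apply_zero] at h
  exact ⟨le_antisymm htotal (hdeg₁.trans (degreeOf_le_totalDegree _ _)),
    le_antisymm ((degreeOf_le_totalDegree _ _).trans htotal) hdeg₁, hlead₁,
    le_antisymm (degreeOf_zero_spSeq_le α β _) hdeg₀⟩

/-- The bivariate polynomial `Sp_n(a, λ)` has total degree `n+1`; its degree in `λ`
is `n+1` with coefficient of `λ^{n+1}` equal to `(-1)^{n+1}`; and its degree in `a`
is `⌊(n+1)/2⌋`. -/
theorem SpMv_degrees (n : ℕ) (hn : 0 < n) :
    (SpMv n).totalDegree = n + 1 ∧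
    (SpMv n).degreeOf 1 = n + 1 ∧
    MvPolynomial.coeff (Finsupp.single 1 (n + 1)) (SpMv n) = (-1) ^ (n + 1) ∧
    (SpMv n).degreeOf 0 = (n + 1) / 2 :=
  SpMv_degrees_general n
end

section
/- Let a ∈ ℝ with a ≥ 3/4^{1/3}, and let τ ∈ [0,1]. Then every complex root of the cubic polynomial β ↦ 4β³ + a²β² − 18aτ(1−τ)β + τ(1−τ)(27τ² − 27τ − 4a³) is real. -/
/-- For real `a ≥ 3/4^{1/3}` and `τ ∈ [0,1]`, all complex roots of the cubic
`4β³ + a²β² − 18aτ(1−τ)β + τ(1−τ)(27τ² − 27τ − 4a³)` are real. -/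
theorem branching_cubic_real_rooted (a : ℝ) (ha : 3 / (4 : ℝ) ^ ((1 : ℝ) / 3) ≤ a)
    (τ : ℝ) (hτ : τ ∈ Set.Icc (0 : ℝ) 1) (z : ℂ) :
    4 * z ^ 3 + (a : ℂ) ^ 2 * z ^ 2 - 18 * (a : ℂ) * (τ : ℂ) * (1 - (τ : ℂ)) * z +
        (τ : ℂ) * (1 - (τ : ℂ)) * (27 * (τ : ℂ) ^ 2 - 27 * (τ : ℂ) - 4 * (a : ℂ) ^ 3) = 0 →
      z.im = 0 := by
  intro h
  by_contra hy
  set x := z.re with hx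
  set y := z.im with hyy
  have hre := congrArg Complex.re h
  have him := congrArg Complex.im h
  simp only [Complex.add_re, Complex.add_im, Complex.sub_re, Complex.sub_im,
    Complex.mul_re, Complex.mul_im, Complex.ofReal_re, Complex.ofReal_im,
    Complex.re_ofNat, Complex.im_ofNat, Complex.one_re, Complex.one_im,
    Complex.zero_re, Complex.zero_im, pow_succ, pow_zero, one_mul,
    Complex.mul_re, Complex.mul_im] at hre him
  set t : ℝ := τ * (1 - τ) with ht
  -- imaginary part gives factorization
  have him' : y * (12*x^2 - 4*y^2 + 2*a^2*x - 18*a*t) = 0 := by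
    linear_combination him
  have hE1 : 12*x^2 + 2*a^2*x - 18*a*t - 4*(y^2) = 0 := by
    rcases mul_eq_zero.mp him' with h1 | h1
    · exact absurd h1 hy
    · linarith
  have hE2 : 4*x^3 - 12*x*(y^2) + a^2*x^2 - a^2*(y^2) - 18*a*t*x - 27*t^2 - 4*a^3*t = 0 := by
    linear_combination hre
  set s : ℝ := y^2 with hs
  have key : 16*t*(a^3-27*t)^3 = -1024*s*((3*x+a^2/4)^2+s)^2 := by
    linear_combination
      ((-256)*s^2 + 1152*a*t*s + (-8100)*a^2*t^2 + (-32)*a^4*s + (-450)*a^5*t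
        + (-34992)*x*t^2 + (-896)*x*a^2*s + (-6408)*x*a^3*t + 2*x*a^6
        + (-5376)*x^2*s + (-19008)*x^2*a*t + 104*x^2*a^4 + 1536*x^3*a^2 + 4608*x^4) * hE1
      + (11664*t^2 + 2376*a^3*t + (-4)*a^6 + 15552*x*a*t + (-216)*x*a^4
        + (-3456)*x^2*a^2 + (-13824)*x^3) * hE2
  -- now derive contradiction
  have hs0 : 0 < s := by positivity
  obtain ⟨hτ0, hτ1⟩ := hτ
  have ht0 : 0 ≤ t := mul_nonneg hτ0 (by linarith)
  have ht14 : t ≤ 1/4 := by nlinarith [sq_nonneg (τ - 1/2)]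
  have h43 : ((4:ℝ) ^ ((1:ℝ)/3)) ^ 3 = 4 := by
    rw [← Real.rpow_natCast ((4:ℝ) ^ ((1:ℝ)/3)) 3, ← Real.rpow_mul (by norm_num)]
    norm_num
  have h4pos : (0:ℝ) < (4:ℝ) ^ ((1:ℝ)/3) := Real.rpow_pos_of_pos (by norm_num) _
  have ha3 : (27:ℝ)/4 ≤ a^3 := by
    have hb : (0:ℝ) ≤ 3 / (4:ℝ) ^ ((1:ℝ)/3) := by positivity
    have := pow_le_pow_left₀ hb ha 3
    calc (27:ℝ)/4 = (3 / (4:ℝ) ^ ((1:ℝ)/3))^3 := by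
          rw [div_pow, h43]; norm_num
      _ ≤ a^3 := this
  have hfac : 0 ≤ (a^3 - 27*t)^3 := by
    apply pow_nonneg; linarith
  have hLHS : 0 ≤ 16*t*(a^3-27*t)^3 := by positivity
  have hRHS : (0:ℝ) < 1024*s*((3*x+a^2/4)^2+s)^2 := by positivity
  linarith [key]
end

section
/- Let a, Λ ∈ ℂ and set P(Θ) = (Θ² − a)² − 4(Θ − Λ), a monic quartic polynomial in Θ. Then P has a multiple complex root (in Θ) if and only if 4Λ³ + a²Λ² − (9/2)·a·Λ − a³ − 27/16 = 0. -/
/-- For `a, Λ ∈ ℂ`, the quartic `P(Θ) = (Θ² − a)² − 4(Θ − Λ)` has a multiple root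
(a common root with its derivative `4Θ(Θ² − a) − 4`) iff
`4Λ³ + a²Λ² − (9/2)aΛ − a³ − 27/16 = 0`. -/
theorem quartic_multiple_root_iff (a Λ : ℂ) :
    (∃ Θ : ℂ, (Θ ^ 2 - a) ^ 2 - 4 * (Θ - Λ) = 0 ∧ 4 * Θ * (Θ ^ 2 - a) - 4 = 0) ↔
      4 * Λ ^ 3 + a ^ 2 * Λ ^ 2 - (9 / 2 : ℂ) * a * Λ - a ^ 3 - 27 / 16 = 0 := by
  constructor
  · rintro ⟨Θ, h1, h2⟩
    have hΘ : Θ ≠ 0 := by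
      rintro rfl
      norm_num at h2
    have key : (16 * Θ^6) * (4 * Λ ^ 3 + a ^ 2 * Λ ^ 2 - (9 / 2 : ℂ) * a * Λ - a ^ 3 - 27 / 16) = 0 := by
      linear_combination ((-2)*a^3*Θ^8 + 5*a^2*Θ^10 + (-4)*a^2*Θ^7 + 8*a*Λ*Θ^8 + (-4)*a*Θ^12 + 16*a*Θ^9 + (-18)*a*Θ^6 + 16*Λ^2*Θ^6 + (-4)*Λ*Θ^10 + 16*Λ*Θ^7 + Θ^14 + (-8)*Θ^11 + 16*Θ^8) * h1 + ((-1/2)*a^4*Θ^7 + (7/4)*a^3*Θ^9 + (-1/2)*a^3*Θ^6 + (-9/4)*a^2*Θ^11 + (23/4)*a^2*Θ^8 + (5/4)*a*Θ^13 + (-8)*a*Θ^10 + (45/4)*a*Θ^7 + (-1/4)*Θ^15 + (11/4)*Θ^12 + (-37/4)*Θ^9 + (27/4)*Θ^6) * h2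
    have h16 : (16:ℂ) * Θ^6 ≠ 0 := by simp [hΘ]
    exact (mul_eq_zero.mp key).resolve_left h16
  · intro hL
    -- get a root x of X^3 - aX - 1
    have hdeg1 : (Polynomial.X ^ 3 - Polynomial.C a * Polynomial.X - 1 : Polynomial ℂ).degree = 3 := by
      compute_degree!
    obtain ⟨x, hx⟩ := Complex.isAlgClosed.exists_root
      (Polynomial.X ^ 3 - Polynomial.C a * Polynomial.X - 1) (by rw [hdeg1]; norm_num)
    have hg : x ^ 3 - a * x - 1 = 0 := by
      simpa using hx
    -- get a root y of Y^2 + xY + (x^2 - a)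
    have hdeg2 : (Polynomial.X ^ 2 + Polynomial.C x * Polynomial.X + Polynomial.C (x ^ 2 - a) : Polynomial ℂ).degree = 2 := by
      compute_degree!
    obtain ⟨y, hy⟩ := Complex.isAlgClosed.exists_root
      (Polynomial.X ^ 2 + Polynomial.C x * Polynomial.X + Polynomial.C (x ^ 2 - a)) (by rw [hdeg2]; norm_num)
    have hq : y ^ 2 + x * y + (x ^ 2 - a) = 0 := by
      simpa using hy
    set z : ℂ := -x - y with hz
    have key : (((x ^ 2 - a) ^ 2 - 4 * (x - Λ)) * ((y ^ 2 - a) ^ 2 - 4 * (y - Λ))) *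
        ((z ^ 2 - a) ^ 2 - 4 * (z - Λ)) = 0 := by
      rw [hz]
      linear_combination (16:ℂ) * hL +
        ((-1)*a^3*x^3 + (-8)*a^2*Λ*x + 3*a^2*x^5 + (-11)*a^2*x^2 + 8*a*Λ*x^3 + (-8)*a*Λ + (-3)*a*x^7 + 22*a*x^4 + (-37)*a*x + x^9 + (-11)*x^6 + 37*x^3 + (-27)) * hg +
        ((-1)*a^5 + 3*a^4*x^2 + 3*a^4*x*y + 3*a^4*y^2 + (-12)*a^3*Λ + (-2)*a^3*x^4 + (-6)*a^3*x^3*y + (-9)*a^3*x^2*y^2 + (-6)*a^3*x*y^3 + (-3)*a^3*y^4 + 28*a^2*Λ*x^2 + 20*a^2*Λ*x*y + 20*a^2*Λ*y^2 + (-2)*a^2*x^6 + 4*a^2*x^5*y + 9*a^2*x^4*y^2 + 11*a^2*x^3*y^3 + 12*a^2*x^3 + 8*a^2*x^2*y^4 + (-24)*a^2*x^2*y + 3*a^2*x*y^5 + (-24)*a^2*x*y^2 + a^2*y^6 + (-16)*a^2 + (-32)*a*Λ^2 + (-20)*a*Λ*x^4 + (-16)*a*Λ*x^3*y + (-28)*a*Λ*x^2*y^2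 + (-24)*a*Λ*x*y^3 + 16*a*Λ*x + (-12)*a*Λ*y^4 + 3*a*x^8 + (-2)*a*x^7*y + (-3)*a*x^6*y^2 + (-4)*a*x^5*y^3 + (-24)*a*x^5 + (-7)*a*x^4*y^4 + 24*a*x^4*y + (-6)*a*x^3*y^5 + 36*a*x^3*y^2 + (-2)*a*x^2*y^6 + 24*a*x^2*y^3 + 48*a*x^2 + 12*a*x*y^4 + 32*Λ^2*x^2 + 32*Λ^2*x*y + 32*Λ^2*y^2 + 4*Λ*x^6 + 12*Λ*x^5*y + 8*Λ*x^4*y^2 + (-4)*Λ*x^3*y^3 + 8*Λ*x^2*y^4 + (-80)*Λ*x^2*y + 12*Λ*x*y^5 + (-80)*Λ*x*y^2 + 4*Λ*y^6 + (-64)*Λ + (-1)*x^10 + x^9*y + (-1)*x^7*y^3 + 12*x^7 + 2*x^6*y^4 + (-16)*x^6*y + 3*x^5*y^5 + (-12)*x^5*y^2 + x^4*y^6 + 4*x^4*y^3 + (-48)*x^4 + (-8)*x^3*y^4 + 48*x^3*y + (-12)*x^2*y^5 + 48*x^2*y^2 + (-4)*x*y^6 + 64*x) * hq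
    have hd1 : 4 * x * (x ^ 2 - a) - 4 = 0 := by linear_combination (4:ℂ) * hg
    have hd2 : 4 * y * (y ^ 2 - a) - 4 = 0 := by
      linear_combination (4:ℂ) * (y - x) * hq + (4:ℂ) * hg
    have hd3 : 4 * z * (z ^ 2 - a) - 4 = 0 := by
      rw [hz]
      linear_combination (4:ℂ) * (-2*x - y) * hq + (4:ℂ) * hg
    rcases mul_eq_zero.mp key with h | h
    · rcases mul_eq_zero.mp h with h' | h'
      · exact ⟨x, h', hd1⟩
      · exact ⟨y, h', hd2⟩
    · exact ⟨z, h, hd3⟩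
end

section
/- For every positive integer n, every a, λ ∈ ℂ and every s ∈ ℂ with s² = a, one has det(λ·Id − K_n(a)) = ∏_{j=0}^{n} (λ − (n − 2j)·s). In particular, the eigenvalues of K_n(a) are exactly the n+1 numbers (n−2j)·s, j = 0,…,n, equally spaced on the segment from −n·s to n·s; for a = 1 this recovers the classical spectrum {−n, −n+2, …, n−2, n} of the Sylvester–Kac matrix. -/
/-- The `(n+1) × (n+1)` tridiagonal (generalized Sylvester–Kac) matrix `K_n(a)` with
superdiagonal entries `K[i][i+1] = (i+1)·a` and subdiagonal entries `K[i+1][i] = n − i`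
(rows and columns indexed by `0, …, n`), all other entries `0`. -/
def Kmat (n : ℕ) (a : ℂ) : Matrix (Fin (n + 1)) (Fin (n + 1)) ℂ :=
  Matrix.of fun i j =>
    if (j : ℕ) = (i : ℕ) + 1 then ((i : ℕ) + 1 : ℂ) * a
    else if (i : ℕ) = (j : ℕ) + 1 then (n : ℂ) - (j : ℕ)
    else 0

open Polynomial

noncomputable def SKf (s : ℂ) (p q : ℕ) : ℂ[X] := (C s + X) ^ p * (C s - X) ^ q

lemma SK_key (s : ℂ) (p q : ℕ) :
    (C (s ^ 2) - X ^ 2) * derivative (SKf s p q) + ((p + q : ℕ) : ℂ[X]) * X * SKf s p q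
      = C (((p : ℂ) - (q : ℂ)) * s) * SKf s p q := by
  unfold SKf
  have e1 : derivative ((C s + X) ^ p * (C s - X) ^ q)
      = (p : ℂ[X]) * (C s + X) ^ (p - 1) * (C s - X) ^ q
        - (q : ℂ[X]) * (C s + X) ^ p * (C s - X) ^ (q - 1) := by
    rw [derivative_mul, derivative_pow, derivative_pow]
    simp
    ring
  rw [e1]
  have hfac : (C (s ^ 2) - X ^ 2 : ℂ[X]) = (C s - X) * (C s + X) := by
    rw [C_pow]; ring
  have hp1 : (p : ℂ[X]) * (C s + X) ^ (p - 1) * (C s + X) = (p : ℂ[X]) * (C s + X) ^ p := by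
    cases p with
    | zero => simp
    | succ m => rw [Nat.succ_sub_one, mul_assoc, ← pow_succ]
  have hq1 : (q : ℂ[X]) * (C s - X) ^ (q - 1) * (C s - X) = (q : ℂ[X]) * (C s - X) ^ q := by
    cases q with
    | zero => simp
    | succ m => rw [Nat.succ_sub_one, mul_assoc, ← pow_succ]
  have hC : (C (((p : ℂ) - (q : ℂ)) * s) : ℂ[X]) = ((p : ℂ[X]) - (q : ℂ[X])) * C s := by
    push_cast [map_mul, map_sub]
    simp
  rw [hC]
  push_cast
  linear_combination (↑p * (C s + X) ^ (p - 1) * (C s - X) ^ q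
      - ↑q * (C s + X) ^ p * (C s - X) ^ (q - 1)) * hfac
    + (C s - X) ^ (q + 1) * hp1 - (C s + X) ^ (p + 1) * hq1

lemma SK_coeff0 (s : ℂ) (p q : ℕ) :
    s ^ 2 * (SKf s p q).coeff 1 = ((p : ℂ) - (q : ℂ)) * s * (SKf s p q).coeff 0 := by
  have h := congrArg (fun g => Polynomial.coeff g 0) (SK_key s p q)
  simp only [sub_mul, coeff_add, coeff_sub, coeff_C_mul, coeff_X_pow_mul',
    coeff_derivative, Polynomial.mul_coeff_zero, coeff_X_mul_zero] at h
  simp only [show ((p + q : ℕ) : ℂ[X]) = C ((p + q : ℕ) : ℂ) by push_cast; simp,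
    mul_assoc, coeff_C_mul, Polynomial.mul_coeff_zero, coeff_X_zero] at h
  simp only [coeff_C, if_pos rfl, coeff_X_pow, Nat.cast_zero] at h
  norm_num at h
  linear_combination h

lemma SK_coeff_succ (s : ℂ) (p q : ℕ) (m : ℕ) :
    s ^ 2 * ((m : ℂ) + 2) * (SKf s p q).coeff (m + 2)
      + (((p + q : ℕ) : ℂ) - (m : ℂ)) * (SKf s p q).coeff m
      = ((p : ℂ) - (q : ℂ)) * s * (SKf s p q).coeff (m + 1) := by
  have h := congrArg (fun g => Polynomial.coeff g (m + 1)) (SK_key s p q)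
  simp only [sub_mul, coeff_add, coeff_sub, coeff_C_mul, coeff_X_pow_mul',
    coeff_derivative] at h
  simp only [show ((p + q : ℕ) : ℂ[X]) = C ((p + q : ℕ) : ℂ) by push_cast; simp,
    mul_assoc, coeff_C_mul, coeff_X_mul] at h
  rcases m with _ | m
  · simp only [show ¬ (2 ≤ 0 + 1) by omega, if_false] at h
    push_cast at h ⊢
    linear_combination h
  · simp only [show (2 ≤ m + 1 + 1) by omega, if_true,
      show m + 1 + 1 - 2 = m from rfl] at h
    push_cast at h ⊢
    linear_combination h

lemma Kmat_mulVec (n : ℕ) (a : ℂ) (c : ℕ → ℂ) (hc : c (n + 1) = 0) (i : Fin (n + 1)) :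
    (Kmat n a).mulVec (fun j : Fin (n + 1) => c (j : ℕ)) i
      = ((i : ℕ) + 1 : ℂ) * a * c ((i : ℕ) + 1)
        + (if 1 ≤ (i : ℕ) then ((n : ℂ) - (((i : ℕ) - 1 : ℕ) : ℂ)) * c ((i : ℕ) - 1) else 0) := by
  classical
  have step1 : (Kmat n a).mulVec (fun j : Fin (n + 1) => c (j : ℕ)) i
      = ∑ j ∈ Finset.range (n + 1),
          ((if j = (i : ℕ) + 1 then ((i : ℕ) + 1 : ℂ) * a * c j else 0)
            + (if 1 ≤ (i : ℕ) then (if j = (i : ℕ) - 1 then ((n : ℂ) - (j : ℂ)) * c j else 0)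
              else 0)) := by
    rw [Matrix.mulVec, dotProduct]
    rw [← Fin.sum_univ_eq_sum_range (fun j =>
      ((if j = (i : ℕ) + 1 then ((i : ℕ) + 1 : ℂ) * a * c j else 0)
        + (if 1 ≤ (i : ℕ) then (if j = (i : ℕ) - 1 then ((n : ℂ) - (j : ℂ)) * c j else 0)
          else 0))) (n + 1)]
    refine Finset.sum_congr rfl fun j _ => ?_
    simp only [Kmat, Matrix.of_apply]
    split_ifs with h1 h2 h3 h4 h5 h6 h7 h8 <;> first | ring1 | omega
  rw [step1, Finset.sum_add_distrib]
  congr 1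
  · rw [Finset.sum_ite_eq' (Finset.range (n + 1)) ((i : ℕ) + 1)
      (fun j => ((i : ℕ) + 1 : ℂ) * a * c j)]
    by_cases h : (i : ℕ) + 1 ∈ Finset.range (n + 1)
    · rw [if_pos h]
    · rw [if_neg h]
      have hi := i.isLt
      have : (i : ℕ) + 1 = n + 1 := by simp only [Finset.mem_range] at h; omega
      rw [this, hc]; ring
  · by_cases h1 : 1 ≤ (i : ℕ)
    · simp only [if_pos h1]
      rw [Finset.sum_ite_eq' (Finset.range (n + 1)) ((i : ℕ) - 1)
        (fun j => ((n : ℂ) - (j : ℂ)) * c j)]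
      have hm : (i : ℕ) - 1 ∈ Finset.range (n + 1) := by
        have := i.isLt; simp only [Finset.mem_range]; omega
      rw [if_pos hm]
    · simp only [if_neg h1, Finset.sum_const_zero]

lemma SKf_natDegree_le (s : ℂ) (p q : ℕ) : (SKf s p q).natDegree ≤ p + q := by
  unfold SKf
  refine le_trans (natDegree_mul_le) (add_le_add ?_ ?_)
  · refine le_trans (natDegree_pow_le) ?_
    rw [add_comm (C s) X]
    simp [natDegree_X_add_C]
  · refine le_trans (natDegree_pow_le) ?_
    have : (C s - X : ℂ[X]) = -(X - C s) := by ring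
    rw [this, natDegree_neg]
    simp [natDegree_X_sub_C]

lemma SKf_coeff_zero (s : ℂ) (p q : ℕ) : (SKf s p q).coeff 0 = s ^ (p + q) := by
  rw [Polynomial.coeff_zero_eq_eval_zero]
  unfold SKf
  simp [pow_add]

lemma SK_eigen (s : ℂ) (p q n : ℕ) (hpq : p + q = n) (i : Fin (n + 1)) :
    (Kmat n (s ^ 2)).mulVec (fun j : Fin (n + 1) => (SKf s p q).coeff (j : ℕ)) i
      = (((p : ℂ) - (q : ℂ)) * s) * (SKf s p q).coeff (i : ℕ) := by
  have hc : (SKf s p q).coeff (n + 1) = 0 := by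
    apply Polynomial.coeff_eq_zero_of_natDegree_lt
    have := SKf_natDegree_le s p q
    omega
  rw [Kmat_mulVec n (s ^ 2) _ hc i]
  rcases hm : (i : ℕ) with _ | m
  · simp only [Nat.cast_zero, zero_add, one_mul, show ¬ (1 ≤ 0) by omega, if_false, add_zero]
    have := SK_coeff0 s p q
    linear_combination this
  · simp only [show 1 ≤ m + 1 by omega, if_true, Nat.add_sub_cancel]
    have h2 := SK_coeff_succ s p q m
    rw [← hpq]
    push_cast at h2 ⊢
    linear_combination h2

lemma SK_det_zero (s : ℂ) (hs : s ≠ 0) (p q n : ℕ) (hpq : p + q = n) :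
    Matrix.det ((((p : ℂ) - (q : ℂ)) * s) • (1 : Matrix (Fin (n + 1)) (Fin (n + 1)) ℂ)
      - Kmat n (s ^ 2)) = 0 := by
  rw [← Matrix.exists_mulVec_eq_zero_iff]
  refine ⟨fun j : Fin (n + 1) => (SKf s p q).coeff (j : ℕ), ?_, ?_⟩
  · intro h0
    have h1 := congrFun h0 ⟨0, by omega⟩
    simp only [Pi.zero_apply] at h1
    rw [SKf_coeff_zero] at h1
    exact pow_ne_zero _ hs h1
  · funext i
    rw [Matrix.sub_mulVec, Matrix.smul_mulVec, Matrix.one_mulVec]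
    simp only [Pi.sub_apply, Pi.smul_apply, smul_eq_mul, Pi.zero_apply]
    rw [SK_eigen s p q n hpq i]
    ring

lemma eval_charpoly' {m : ℕ} (M : Matrix (Fin m) (Fin m) ℂ) (t : ℂ) :
    (M.charpoly).eval t = (t • (1 : Matrix (Fin m) (Fin m) ℂ) - M).det := by
  rw [Matrix.charpoly, ← Polynomial.coe_evalRingHom, RingHom.map_det]
  congr 1
  ext i j
  by_cases h : i = j
  · subst h
    simp [Matrix.charmatrix_apply, Matrix.one_apply]
  · simp [Matrix.charmatrix_apply, Matrix.one_apply, h, Matrix.diagonal_apply_ne _ h]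

/-- For any `s` with `s² = a`, `det (λ·Id − K_n(a)) = ∏_{j=0}^{n} (λ − (n−2j)·s)`; the
eigenvalues of `K_n(a)` are the `n+1` equally spaced numbers `(n−2j)·s`, `j = 0, …, n`
(for `a = 1` the classical Sylvester–Kac spectrum `−n, −n+2, …, n`). -/
theorem sylvester_kac_eigenvalues (n : ℕ) (hn : 0 < n) (a lam s : ℂ) (hs : s ^ 2 = a) :
    Matrix.det (lam • (1 : Matrix (Fin (n + 1)) (Fin (n + 1)) ℂ) - Kmat n a) =
      ∏ j ∈ Finset.range (n + 1), (lam - ((n : ℂ) - 2 * (j : ℂ)) * s) := by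
  subst hs
  by_cases hs0 : s = 0
  · subst hs0
    have h02 : ((0 : ℂ) ^ 2) = 0 := by norm_num
    rw [h02]
    have htri : (lam • (1 : Matrix (Fin (n + 1)) (Fin (n + 1)) ℂ) - Kmat n 0).BlockTriangular
        OrderDual.toDual := by
      intro i j hij
      have hij' : i < j := hij
      have h1 : (1 : Matrix (Fin (n + 1)) (Fin (n + 1)) ℂ) i j = 0 :=
        Matrix.one_apply_ne (ne_of_lt hij')
      have h2 : Kmat n 0 i j = 0 := by
        simp only [Kmat, Matrix.of_apply]
        have hlt : (i : ℕ) < (j : ℕ) := hij'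
        split_ifs with hA hB
        · ring
        · exfalso; omega
        · rfl
      simp [Matrix.sub_apply, h1, h2]
    rw [Matrix.det_of_lowerTriangular _ htri]
    have hdiag : ∀ i : Fin (n + 1),
        (lam • (1 : Matrix (Fin (n + 1)) (Fin (n + 1)) ℂ) - Kmat n 0) i i = lam := by
      intro i
      have h2 : Kmat n 0 i i = 0 := by
        simp [Kmat]
      simp [Matrix.sub_apply, h2, Matrix.one_apply]
    rw [Finset.prod_congr rfl fun i _ => hdiag i]
    simp
  · -- s ≠ 0
    set μ : ℕ → ℂ := fun j => ((n : ℂ) - 2 * (j : ℂ)) * s with hμ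
    have hcp : (Kmat n (s ^ 2)).charpoly
        = ∏ j ∈ Finset.range (n + 1), (X - C (μ j)) := by
      set P : ℂ[X] := ∏ j ∈ Finset.range (n + 1), (X - C (μ j)) with hP
      have hmon1 : (Kmat n (s ^ 2)).charpoly.Monic := Matrix.charpoly_monic _
      have hmonP : P.Monic := monic_prod_of_monic _ _ fun j _ => monic_X_sub_C _
      have hdeg1 : (Kmat n (s ^ 2)).charpoly.natDegree = n + 1 := by
        rw [Matrix.charpoly_natDegree_eq_dim]; simp
      have hdegP : P.natDegree = n + 1 := by
        rw [hP, Polynomial.natDegree_prod _ _ fun j _ => X_sub_C_ne_zero _]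
        simp [natDegree_X_sub_C]
      have hroot : ∀ j : Fin (n + 1),
          ((Kmat n (s ^ 2)).charpoly - P).eval (μ (j : ℕ)) = 0 := by
        intro j
        have hj : (j : ℕ) ≤ n := by omega
        have h1 : ((Kmat n (s ^ 2)).charpoly).eval (μ (j : ℕ)) = 0 := by
          rw [eval_charpoly']
          have hval : μ (j : ℕ) = (((n - (j : ℕ) : ℕ) : ℂ) - ((j : ℕ) : ℂ)) * s := by
            rw [hμ]; push_cast [Nat.cast_sub hj]; ring
          rw [hval]
          exact SK_det_zero s hs0 (n - (j : ℕ)) (j : ℕ) n (by omega)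
        have h2 : P.eval (μ (j : ℕ)) = 0 := by
          rw [hP, Polynomial.eval_prod]
          exact Finset.prod_eq_zero (Finset.mem_range.2 j.isLt) (by simp)
        simp [Polynomial.eval_sub, h1, h2]
      by_cases hd : (Kmat n (s ^ 2)).charpoly - P = 0
      · exact sub_eq_zero.mp hd
      · exfalso
        apply hd
        have hdeq : ((Kmat n (s ^ 2)).charpoly).degree = P.degree := by
          rw [Polynomial.degree_eq_natDegree hmon1.ne_zero,
            Polynomial.degree_eq_natDegree hmonP.ne_zero, hdeg1, hdegP]
        have hlt : ((Kmat n (s ^ 2)).charpoly - P).degree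
            < ((Kmat n (s ^ 2)).charpoly).degree :=
          Polynomial.degree_sub_lt hdeq hmon1.ne_zero (by rw [hmon1.leadingCoeff, hmonP.leadingCoeff])
        have hlt' : ((Kmat n (s ^ 2)).charpoly - P).natDegree < n + 1 := by
          rw [Polynomial.natDegree_lt_iff_degree_lt hd]
          rw [Polynomial.degree_eq_natDegree hmon1.ne_zero, hdeg1] at hlt
          exact_mod_cast hlt
        have hinj : Function.Injective (fun j : Fin (n + 1) => μ (j : ℕ)) := by
          intro j k h
          have h' : ((n : ℂ) - 2 * (j : ℕ)) * s = ((n : ℂ) - 2 * (k : ℕ)) * s := h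
          have h2 : ((j : ℕ) : ℂ) = ((k : ℕ) : ℂ) := by
            have := mul_right_cancel₀ hs0 h'
            linear_combination (this) / (-2)
          have h3 : (j : ℕ) = (k : ℕ) := Nat.cast_injective h2
          exact Fin.ext h3
        exact Polynomial.eq_zero_of_natDegree_lt_card_of_eval_eq_zero _ hinj hroot
          (by simpa using hlt')
    calc Matrix.det (lam • (1 : Matrix (Fin (n + 1)) (Fin (n + 1)) ℂ) - Kmat n (s ^ 2))
        = ((Kmat n (s ^ 2)).charpoly).eval lam := (eval_charpoly' _ _).symm
      _ = ∏ j ∈ Finset.range (n + 1), (lam - μ j) := by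
          rw [hcp, Polynomial.eval_prod]
          exact Finset.prod_congr rfl fun j _ => by simp
      _ = ∏ j ∈ Finset.range (n + 1), (lam - ((n : ℂ) - 2 * (j : ℂ)) * s) := rfl
end

section
/- For every positive integer n and all t, λ, a ∈ ℂ, det(K_n(t²·a) − t·λ·Id) = t^{n+1}·det(K_n(a) − λ·Id); that is, the characteristic polynomial of K_n(a) is quasihomogeneous with the variable λ of weight 1 and the parameter a of weight 2. -/
/-!
Conjugating by `D = diag(1, t, …, tⁿ)` multiplies the `(i, j)` entry by `t^(i-j)`, so it turns the
superdiagonal factor `t²` of `K_n(t²a)` into `t` and multiplies the subdiagonal by `t`; hence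
`D (K_n(t²a) − tλ) D⁻¹ = t (K_n(a) − λ)` for `t ≠ 0`. For `t = 0` both sides vanish, `K_n(0)`
being strictly lower triangular.
-/

open Matrix

theorem Matrix.det_eq_pow_mul_det_of_mul_eq_smul_mul {R ι : Type*} [CommRing R] [IsDomain R]
    [Fintype ι] [DecidableEq ι] {A B D : Matrix ι ι R} {c : R} (hD : D.det ≠ 0)
    (h : D * B = c • (A * D)) : B.det = c ^ Fintype.card ι * A.det := by
  have hdet := congrArg det h
  rw [det_smul, det_mul, det_mul] at hdet
  exact mul_left_cancel₀ hD (by rw [hdet]; ring)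

namespace Kmat

theorem isLowerTriangular_zero (n : ℕ) : (Kmat n 0).IsLowerTriangular := by
  intro i j hij
  have hij : (i : ℕ) < j := hij
  simp only [Kmat, of_apply, mul_zero]
  split_ifs <;> first | rfl | omega

theorem det_zero (n : ℕ) : (Kmat n 0).det = 0 := by
  rw [det_of_isLowerTriangular _ (isLowerTriangular_zero n)]
  exact Finset.prod_eq_zero (Finset.mem_univ 0) (by simp [Kmat])

theorem diagonal_pow_mul (n : ℕ) (t a : ℂ) :
    diagonal (fun i : Fin (n + 1) => t ^ (i : ℕ)) * Kmat n (t ^ 2 * a) =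
      t • (Kmat n a * diagonal fun i : Fin (n + 1) => t ^ (i : ℕ)) := by
  ext i j
  rw [Matrix.smul_apply, diagonal_mul, mul_diagonal, smul_eq_mul]
  simp only [Kmat, of_apply]
  split_ifs with hsup hsub
  · rw [hsup]; ring
  · rw [hsub]; ring
  · ring

theorem diagonal_pow_mul_sub_smul_one (n : ℕ) (t lam a : ℂ) :
    diagonal (fun i : Fin (n + 1) => t ^ (i : ℕ)) * (Kmat n (t ^ 2 * a) - (t * lam) • 1) =
      t • ((Kmat n a - lam • 1) * diagonal fun i : Fin (n + 1) => t ^ (i : ℕ)) := by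
  rw [mul_sub, diagonal_pow_mul, sub_mul, smul_sub, mul_smul_comm, mul_one, smul_mul_assoc,
    one_mul, smul_smul]

end Kmat

theorem sylvester_kac_quasihomogeneous_general (n : ℕ) (t lam a : ℂ) :
    Matrix.det (Kmat n (t ^ 2 * a) - (t * lam) • (1 : Matrix (Fin (n + 1)) (Fin (n + 1)) ℂ)) =
      t ^ (n + 1) *
        Matrix.det (Kmat n a - lam • (1 : Matrix (Fin (n + 1)) (Fin (n + 1)) ℂ)) := by
  rcases eq_or_ne t 0 with rfl | ht
  · simp [Kmat.det_zero]
  · have hD : (diagonal fun i : Fin (n + 1) => t ^ (i : ℕ)).det ≠ 0 := by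
      rw [det_diagonal]
      exact Finset.prod_ne_zero_iff.mpr fun i _ => pow_ne_zero _ ht
    simpa using
      det_eq_pow_mul_det_of_mul_eq_smul_mul hD (Kmat.diagonal_pow_mul_sub_smul_one n t lam a)

/-- Quasihomogeneity of the characteristic polynomial of `K_n(a)`:
`det (K_n(t²a) − tλ·Id) = t^{n+1}·det (K_n(a) − λ·Id)`, i.e. `λ` has weight `1` and
`a` has weight `2`. -/
theorem sylvester_kac_quasihomogeneous (n : ℕ) (hn : 0 < n) (t lam a : ℂ) :
    Matrix.det (Kmat n (t ^ 2 * a) - (t * lam) • (1 : Matrix (Fin (n + 1)) (Fin (n + 1)) ℂ)) =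
      t ^ (n + 1) *
        Matrix.det (Kmat n a - lam • (1 : Matrix (Fin (n + 1)) (Fin (n + 1)) ℂ)) :=
  sylvester_kac_quasihomogeneous_general n t lam a
end

section
/- There exists a sequence (Y_n)_{n≥0} of polynomials in ℚ[t] with Y_0 = 1, Y_1 = t, satisfying for all n ≥ 1 the Yablonskii–Vorob'ev recurrence Y_{n+1}·Y_{n−1} = t·Y_n² − 4·(Y_n·Y_n'' − (Y_n')²); in other words, although this recurrence a priori only defines Y_{n+1} as a rational function, each Y_{n+1} is in fact a polynomial. Moreover, for every such sequence, deg Y_n = n(n+1)/2 for all n ≥ 0. -/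
open Polynomial

/-- A sequence of rational polynomials satisfying the Yablonskii–Vorob'ev recurrence
`Y_{n+1}·Y_{n−1} = t·Y_n² − 4·(Y_n·Y_n'' − (Y_n')²)` with `Y₀ = 1`, `Y₁ = t`. -/
def IsYablonskiiVorobev (Y : ℕ → Polynomial ℚ) : Prop :=
  Y 0 = 1 ∧ Y 1 = X ∧
    ∀ n : ℕ, 1 ≤ n →
      Y (n + 1) * Y (n - 1) =
        X * (Y n) ^ 2 - 4 * (Y n * derivative (derivative (Y n)) - (derivative (Y n)) ^ 2)

/-!
Write `F(p) = t p² − 4 (p p'' − p'²)`, so that the recurrence reads `Y_{n+1} Y_{n−1} = F(Y_n)`, and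
propagate along with it the Wronskian identity
`W(Y_{n−1}, Y_{n+1}) = Y_{n−1} Y_{n+1}' − Y_{n−1}' Y_{n+1} = (2n+1) Y_n²`.
It makes `Y_{n+1}` coprime to `Y_{n+1}'` and to `Y_{n−1}`; then
`Y_{n+2} Y_n = F(Y_{n+1}) ≡ 4 Y_{n+1}'² (mod Y_{n+1})` makes consecutive terms coprime.

Modulo `Y_n`, the recurrence, its first two derivatives and `Y_n ∣ W(Y_{n−1}, Y_{n+1})` turn
`Y_{n−1}⁴ F(Y_{n+1})` into a multiple of `F(Y_{n−1}) = Y_n Y_{n−2}`; as `Y_{n−1}` is coprime to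
`Y_n`, the division `Y_{n+2} = F(Y_{n+1}) / Y_n` is exact. For the next Wronskian,
`Y_n W(Y_n, Y_{n+2}) = Y_n F(Y_{n+1})' − 2 Y_n' F(Y_{n+1})` vanishes together with its derivative
modulo `Y_{n+1}`, so `Y_{n+1}²` divides `W(Y_n, Y_{n+2})`. The latter has degree at most
`2 deg Y_{n+1}`, so the quotient is a constant, read off from the top coefficient as
`deg Y_{n+2} − deg Y_n = 2n + 3`. All `Y_n` are monic and `deg F(p) = 2 deg p + 1`, which gives the
degrees.
-/

namespace Polynomial

section CommRing

variable {R : Type*} [CommRing R]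

-- The map `F` of the recurrence `Y_{n+1} Y_{n−1} = F(Y_n)`.
noncomputable def yvRhs (p : R[X]) : R[X] :=
  X * p ^ 2 - 4 * (p * derivative (derivative p) - derivative p ^ 2)

theorem derivative_yvRhs (p : R[X]) :
    derivative (yvRhs p) = p ^ 2 + 2 * X * p * derivative p
      + 4 * derivative p * derivative (derivative p)
      - 4 * p * derivative (derivative (derivative p)) := by
  simp only [yvRhs, derivative_mul, derivative_sub, derivative_X, derivative_pow,
    derivative_ofNat, Nat.cast_ofNat, map_ofNat]
  ring

theorem derivative_derivative_yvRhs (p : R[X]) :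
    derivative (derivative (yvRhs p)) = 4 * p * derivative p + 2 * X * derivative p ^ 2
      + 2 * X * p * derivative (derivative p) + 4 * derivative (derivative p) ^ 2
      - 4 * p * derivative (derivative (derivative (derivative p))) := by
  simp only [derivative_yvRhs, derivative_mul, derivative_sub, derivative_add, derivative_X,
    derivative_pow, derivative_ofNat, Nat.cast_ofNat, map_ofNat]
  ring

theorem _root_.AdjoinRoot.mk_yvRhs (p : R[X]) :
    AdjoinRoot.mk p (yvRhs p) = 4 * AdjoinRoot.mk p (derivative p) ^ 2 := by
  simp only [yvRhs, map_sub, map_mul, map_pow, map_ofNat, AdjoinRoot.mk_self]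
  ring

theorem _root_.AdjoinRoot.mk_derivative_yvRhs (p : R[X]) :
    AdjoinRoot.mk p (derivative (yvRhs p)) =
      4 * AdjoinRoot.mk p (derivative p) * AdjoinRoot.mk p (derivative (derivative p)) := by
  simp only [derivative_yvRhs, map_sub, map_add, map_mul, map_pow, map_ofNat, AdjoinRoot.mk_self]
  ring

theorem _root_.AdjoinRoot.mk_derivative_derivative_yvRhs (p : R[X]) :
    AdjoinRoot.mk p (derivative (derivative (yvRhs p))) =
      2 * AdjoinRoot.mk p X * AdjoinRoot.mk p (derivative p) ^ 2
        + 4 * AdjoinRoot.mk p (derivative (derivative p)) ^ 2 := by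
  simp only [derivative_derivative_yvRhs, map_sub, map_add, map_mul, map_pow, map_ofNat,
    AdjoinRoot.mk_self]
  ring

theorem dvd_yvRhs_of_mul_eq_yvRhs {a b c : R[X]} (hab : IsCoprime a b) (hrec : c * a = yvRhs b)
    (hW : b ∣ wronskian a c) (ha : b ∣ yvRhs a) : b ∣ yvRhs c := by
  suffices b ∣ a ^ 4 * yvRhs c from (hab.symm.pow_right).dvd_of_dvd_mul_left this
  have h0 := congrArg (AdjoinRoot.mk b) hrec
  have h1 := congrArg (AdjoinRoot.mk b ∘ derivative) hrec
  have h2 := congrArg (AdjoinRoot.mk b ∘ derivative ∘ derivative) hrec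
  rw [wronskian, ← AdjoinRoot.mk_eq_zero] at hW
  rw [← AdjoinRoot.mk_eq_zero] at ha ⊢
  simp only [Function.comp_apply, AdjoinRoot.mk_yvRhs, AdjoinRoot.mk_derivative_yvRhs,
    AdjoinRoot.mk_derivative_derivative_yvRhs, derivative_mul, map_add, map_mul, map_sub]
    at h0 h1 h2 hW
  simp only [yvRhs, map_sub, map_mul, map_pow, map_ofNat] at ha ⊢
  set π := AdjoinRoot.mk b
  -- Eliminating `c`, `c'`, `c''` by `h0`, `h1 ± hW` and `h2` leaves a multiple of `F(a)`.
  set A := π a; set A1 := π (derivative a); set A2 := π (derivative (derivative a))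
  set B1 := π (derivative b); set B2 := π (derivative (derivative b))
  set C0 := π c; set C1 := π (derivative c); set C2 := π (derivative (derivative c))
  linear_combination (4 * (A * B1 * B2 - 2 * A1 * B1 ^ 2) - 8 * A * B1 * B2) *
      (2 * A1 * h0 - A * (h1 - hW)) - 4 * A ^ 3 * C0 * h2
    + (4 * A ^ 2 * B1 * B2 + 4 * A ^ 2 * A1 * C0 + 2 * A ^ 3 * C1) * (h1 + hW)
    + 8 * A ^ 2 * B1 * B2 * (h1 - hW)
    + (16 * A * A2 * B1 ^ 2 - 16 * A ^ 2 * B2 ^ 2 + 4 * A ^ 2 * A2 * C0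
      - 4 * π X * A ^ 2 * B1 ^ 2 + π X * A ^ 3 * C0) * h0
    - 16 * B1 ^ 4 * ha

theorem sq_dvd_of_dvd_of_dvd_derivative {c p : R[X]} (hc : IsCoprime c (derivative c))
    (hp : c ∣ p) (hp' : c ∣ derivative p) : c ^ 2 ∣ p := by
  obtain ⟨q, rfl⟩ := hp
  rw [derivative_mul] at hp'
  obtain ⟨r, rfl⟩ := hc.dvd_of_dvd_mul_left ((dvd_add_left (dvd_mul_right c _)).mp hp')
  exact ⟨r, by ring⟩

theorem sq_dvd_wronskian {a b c d : R[X]} {k : R} (hca : IsCoprime c a)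
    (hcc' : IsCoprime c (derivative c)) (hbc : IsCoprime b c) (hrec : c * a = yvRhs b)
    (hW : wronskian a c = C k * b ^ 2) (hdb : d * b = yvRhs c) :
    c ^ 2 ∣ wronskian b d := by
  rw [wronskian] at hW ⊢
  set W := b * derivative d - derivative b * d
  have hV : b * W = b * derivative (yvRhs c) - 2 * derivative b * yvRhs c := by
    rw [← hdb, derivative_mul]; ring
  have hV' : derivative (b * W) = b * derivative (derivative (yvRhs c))
      - derivative b * derivative (yvRhs c) - 2 * derivative (derivative b) * yvRhs c := by
    rw [hV]
    simp only [derivative_mul, derivative_sub, derivative_ofNat]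
    ring
  have hW' : a * derivative (derivative c) - derivative (derivative a) * c
      = C k * (2 * b * derivative b) := by
    have := congrArg derivative hW
    simp only [derivative_mul, derivative_sub, derivative_C, derivative_sq, map_ofNat] at this
    linear_combination this
  replace hrec := congrArg (AdjoinRoot.mk c) hrec
  replace hW := congrArg (AdjoinRoot.mk c) hW
  replace hW' := congrArg (AdjoinRoot.mk c) hW'
  simp only [yvRhs, map_sub, map_mul, map_pow, map_ofNat, AdjoinRoot.mk_self, AdjoinRoot.mk_C,
    zero_mul] at hrec hW hW'
  set π := AdjoinRoot.mk c
  set κ := AdjoinRoot.of c k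
  have hcV : c ∣ a * (b * W) := by
    rw [← AdjoinRoot.mk_eq_zero, map_mul, hV]
    simp only [map_sub, map_mul, map_ofNat, AdjoinRoot.mk_yvRhs, AdjoinRoot.mk_derivative_yvRhs]
    linear_combination
      4 * π (derivative c) * π b * hW' - 8 * π (derivative b) * π (derivative c) * hW
  have hcV' : c ∣ a ^ 2 * derivative (b * W) := by
    rw [← AdjoinRoot.mk_eq_zero, map_mul, hV']
    simp only [map_sub, map_mul, map_pow, map_ofNat, AdjoinRoot.mk_yvRhs,
      AdjoinRoot.mk_derivative_yvRhs, AdjoinRoot.mk_derivative_derivative_yvRhs]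
    set B := π b; set B1 := π (derivative b); set B2 := π (derivative (derivative b))
    set u := π (derivative c) * π a; set v := π (derivative (derivative c)) * π a
    linear_combination (2 * π X * B - 8 * B2) * (u + κ * B ^ 2) * hW
      + 4 * B * (v + 2 * κ * B * B1) * hW' - 4 * B1 * (u * hW' + 2 * κ * B * B1 * hW)
      - 2 * κ ^ 2 * B ^ 3 * hrec
  exact (hbc.pow_right.symm.dvd_of_dvd_mul_left (sq_dvd_of_dvd_of_dvd_derivative hcc'
    (hca.dvd_of_dvd_mul_left hcV) ((hca.pow_right).dvd_of_dvd_mul_left hcV')))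

theorem natDegree_mul_derivative_derivative_sub_sq_le (p : R[X]) :
    (p * derivative (derivative p) - derivative p ^ 2).natDegree ≤ 2 * p.natDegree := by
  refine (natDegree_sub_le _ _).trans
    (max_le (natDegree_mul_le.trans ?_) (natDegree_pow_le.trans ?_))
  · have := (natDegree_derivative_le (derivative p)).trans
      (Nat.sub_le_sub_right (natDegree_derivative_le p) 1)
    omega
  · have := natDegree_derivative_le p
    omega

theorem natDegree_four_mul_lt_natDegree_X_mul_sq [Nontrivial R] {p : R[X]} (hp : p.Monic) :
    (4 * (p * derivative (derivative p) - derivative p ^ 2)).natDegree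
      < (X * p ^ 2).natDegree := by
  rw [(monic_X).natDegree_mul (hp.pow 2), natDegree_X, hp.natDegree_pow]
  have := natDegree_mul_derivative_derivative_sub_sq_le p
  have := natDegree_mul_le (p := (4 : R[X])) (q := p * derivative (derivative p) - derivative p ^ 2)
  have : (4 : R[X]).natDegree = 0 := natDegree_ofNat 4
  omega

theorem Monic.yvRhs [Nontrivial R] {p : R[X]} (hp : p.Monic) : (yvRhs p).Monic :=
  (monic_X.mul (hp.pow 2)).sub_of_left
    (degree_lt_degree (natDegree_four_mul_lt_natDegree_X_mul_sq hp))

theorem Monic.natDegree_yvRhs [Nontrivial R] {p : R[X]} (hp : p.Monic) :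
    p.yvRhs.natDegree = 2 * p.natDegree + 1 := by
  rw [Polynomial.yvRhs,
    natDegree_sub_eq_left_of_natDegree_lt (natDegree_four_mul_lt_natDegree_X_mul_sq hp),
    (monic_X).natDegree_mul (hp.pow 2), natDegree_X, hp.natDegree_pow]
  omega

theorem isCoprime_derivative_mul_of_wronskian {a b c k : R[X]} (hk : IsUnit k)
    (hbc : IsCoprime b c) (hW : wronskian a c = k * b ^ 2) : IsCoprime c (derivative c * a) := by
  have : derivative c * a = k * b ^ 2 + c * derivative a := by
    rw [← hW, wronskian]; ring
  rw [this]
  exact ((isCoprime_mul_unit_left_right hk c _).mpr hbc.symm.pow_right).add_mul_left_right _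

theorem isCoprime_of_mul_eq_yvRhs {b c d : R[X]} (h4 : IsUnit (4 : R))
    (hcc' : IsCoprime c (derivative c)) (hdb : d * b = yvRhs c) : IsCoprime c d := by
  have : d * b = 4 * derivative c ^ 2 + c * (X * c - 4 * derivative (derivative c)) := by
    rw [hdb, yvRhs]; ring
  have hcdb : IsCoprime c (d * b) := by
    rw [this]
    have h4 : IsUnit (4 : R[X]) := by simpa only [map_ofNat] using h4.map C
    exact ((isCoprime_mul_unit_left_right h4 c _).mpr hcc'.pow_right).add_mul_left_right _
  exact hcdb.of_mul_right_left

theorem natDegree_derivative_mul_le {p q : R[X]} {N : ℕ}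
    (h : p.natDegree + q.natDegree = N + 1) : (derivative p * q).natDegree ≤ N := by
  by_cases hp : p.natDegree = 0
  · simp [derivative_of_natDegree_zero hp]
  · have := natDegree_derivative_lt hp
    exact natDegree_mul_le.trans (by omega)

theorem Monic.coeff_derivative_mul {p q : R[X]} {N : ℕ} (hp : p.Monic) (hq : q.Monic)
    (h : p.natDegree + q.natDegree = N + 1) : (derivative p * q).coeff N = p.natDegree := by
  by_cases hp0 : p.natDegree = 0
  · simp [derivative_of_natDegree_zero hp0, hp0]
  · have hN : N = (p.natDegree - 1) + q.natDegree := by omega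
    rw [hN, coeff_mul_add_eq_of_natDegree_le (natDegree_derivative_le p) le_rfl, coeff_derivative,
      Nat.sub_add_cancel (Nat.pos_of_ne_zero hp0), hp.coeff_natDegree, hq.coeff_natDegree]
    simp [Nat.cast_sub (Nat.pos_of_ne_zero hp0)]

theorem natDegree_wronskian_le {a b : R[X]} {N : ℕ} (h : a.natDegree + b.natDegree = N + 1) :
    (wronskian a b).natDegree ≤ N := by
  rw [wronskian, mul_comm a]
  exact (natDegree_sub_le _ _).trans (max_le (natDegree_derivative_mul_le (by omega))
    (natDegree_derivative_mul_le h))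

theorem Monic.coeff_wronskian {a b : R[X]} {N : ℕ} (ha : a.Monic) (hb : b.Monic)
    (h : a.natDegree + b.natDegree = N + 1) :
    (wronskian a b).coeff N = b.natDegree - a.natDegree := by
  rw [wronskian, coeff_sub, mul_comm a, hb.coeff_derivative_mul ha (by omega),
    ha.coeff_derivative_mul hb h]

theorem Monic.wronskian_eq_of_sq_dvd [IsDomain R] {b c d : R[X]} (hb : b.Monic) (hc : c.Monic)
    (hd : d.Monic) (hdeg : b.natDegree + d.natDegree = 2 * c.natDegree + 1)
    (hdvd : c ^ 2 ∣ wronskian b d) :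
    wronskian b d = C ((d.natDegree : R) - b.natDegree) * c ^ 2 := by
  rw [← sub_eq_zero]
  refine eq_zero_of_dvd_of_degree_lt (dvd_sub hdvd (dvd_mul_left _ _)) ?_
  rw [degree_eq_natDegree (hc.pow 2).ne_zero, hc.natDegree_pow, degree_lt_iff_coeff_zero]
  intro m hm
  have hle : (wronskian b d - C ((d.natDegree : R) - b.natDegree) * c ^ 2).natDegree
      ≤ 2 * c.natDegree := by
    refine (natDegree_sub_le _ _).trans (max_le (natDegree_wronskian_le hdeg) ?_)
    exact natDegree_C_mul_le _ _ |>.trans (hc.natDegree_pow 2).le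
  rcases hm.lt_or_eq with hm | rfl
  · exact coeff_eq_zero_of_natDegree_lt (by omega)
  · rw [coeff_sub, hb.coeff_wronskian hd hdeg, coeff_C_mul, ← hc.natDegree_pow,
      (hc.pow 2).coeff_natDegree, mul_one, sub_self]

end CommRing

end Polynomial

section CommRing

variable {R : Type*} [CommRing R]

-- `a, b, c` stand for `Y_{n−1}, Y_n, Y_{n+1}`.
structure IsYVTriple (n : ℕ) (a b c : R[X]) : Prop where
  mul_eq_yvRhs : c * a = yvRhs b
  wronskian_eq : wronskian a c = C (2 * n + 1 : R) * b ^ 2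
  isCoprime_left : IsCoprime a b
  isCoprime_right : IsCoprime b c
  dvd_yvRhs : b ∣ yvRhs a
  monic_mid : b.Monic
  monic_right : c.Monic
  two_mul_natDegree_mid : 2 * b.natDegree = n * (n + 1)
  natDegree_right : c.natDegree = b.natDegree + (n + 1)

-- The recurrence run backwards from `Y₀ = 1, Y₁ = t` gives `Y_{−1} = 1`.
theorem isYVTriple_zero [Nontrivial R] : IsYVTriple (R := R) 0 1 1 X where
  mul_eq_yvRhs := by simp [yvRhs]
  wronskian_eq := by simp [wronskian]
  isCoprime_left := isCoprime_one_left
  isCoprime_right := isCoprime_one_left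
  dvd_yvRhs := one_dvd _
  monic_mid := monic_one
  monic_right := monic_X
  two_mul_natDegree_mid := by simp
  natDegree_right := by simp

end CommRing

section Field

variable {K : Type*} [Field K] [CharZero K]

theorem IsYVTriple.next {n : ℕ} {a b c : K[X]} (h : IsYVTriple n a b c) :
    IsYVTriple (n + 1) b c (yvRhs c /ₘ b) := by
  set d := yvRhs c /ₘ b
  have hdb : d * b = yvRhs c := by
    have hdvd := dvd_yvRhs_of_mul_eq_yvRhs h.isCoprime_left h.mul_eq_yvRhs
      (h.wronskian_eq ▸ dvd_mul_of_dvd_right (dvd_pow_self b two_ne_zero) _) h.dvd_yvRhs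
    have := modByMonic_add_div (yvRhs c) b
    rwa [(modByMonic_eq_zero_iff_dvd h.monic_mid).mpr hdvd, zero_add, mul_comm] at this
  have hk : IsUnit (C (2 * n + 1 : K)) :=
    isUnit_C.mpr (Ne.isUnit (by exact_mod_cast (2 * n).succ_ne_zero))
  have hcop := isCoprime_derivative_mul_of_wronskian hk h.isCoprime_right h.wronskian_eq
  have hcc' := hcop.of_mul_right_left
  have hd : d.Monic := h.monic_mid.of_mul_monic_right (hdb ▸ h.monic_right.yvRhs)
  have hdeg : b.natDegree + d.natDegree = 2 * c.natDegree + 1 := by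
    rw [← h.monic_right.natDegree_yvRhs, ← hdb, hd.natDegree_mul h.monic_mid, add_comm]
  refine ⟨hdb, ?_, h.isCoprime_right,
    isCoprime_of_mul_eq_yvRhs (Ne.isUnit (by norm_num)) hcc' hdb, ⟨a, h.mul_eq_yvRhs.symm⟩,
    h.monic_right, hd, ?_, ?_⟩
  · rw [h.monic_mid.wronskian_eq_of_sq_dvd h.monic_right hd hdeg
      (sq_dvd_wronskian hcop.of_mul_right_right hcc' h.isCoprime_right h.mul_eq_yvRhs
        h.wronskian_eq hdb)]
    have : d.natDegree = b.natDegree + (2 * n + 3) := by have := h.natDegree_right; omega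
    rw [this]
    congr 2
    push_cast
    ring
  · rw [h.natDegree_right, mul_add, h.two_mul_natDegree_mid]
    ring
  · have := h.natDegree_right
    omega

-- The division is exact, see `IsYVTriple.next`.
variable (K) in
noncomputable def yablonskiiVorobev : ℕ → K[X]
  | 0 => 1
  | 1 => X
  | n + 2 => yvRhs (yablonskiiVorobev (n + 1)) /ₘ yablonskiiVorobev n

theorem isYVTriple_yablonskiiVorobev (n : ℕ) :
    IsYVTriple (n + 1) (yablonskiiVorobev K n) (yablonskiiVorobev K (n + 1))
      (yablonskiiVorobev K (n + 2)) := by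
  induction n with
  | zero => exact isYVTriple_zero.next
  | succ n ih => exact ih.next

theorem monic_yablonskiiVorobev : ∀ n, (yablonskiiVorobev K n).Monic
  | 0 => monic_one
  | n + 1 => (isYVTriple_yablonskiiVorobev n).monic_mid

theorem natDegree_yablonskiiVorobev : ∀ n, (yablonskiiVorobev K n).natDegree = n * (n + 1) / 2
  | 0 => natDegree_one
  | n + 1 => by have := (isYVTriple_yablonskiiVorobev (K := K) n).two_mul_natDegree_mid; omega

end Field

theorem isYablonskiiVorobev_yablonskiiVorobev : IsYablonskiiVorobev (yablonskiiVorobev ℚ) := by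
  refine ⟨rfl, rfl, fun n hn => ?_⟩
  obtain ⟨m, rfl⟩ := Nat.exists_eq_add_of_le' hn
  exact (isYVTriple_yablonskiiVorobev m).mul_eq_yvRhs

theorem IsYablonskiiVorobev.eq_yablonskiiVorobev {Y : ℕ → ℚ[X]} (hY : IsYablonskiiVorobev Y) :
    Y = yablonskiiVorobev ℚ := by
  obtain ⟨h0, h1, hrec⟩ := hY
  funext n
  induction n using Nat.twoStepInduction with
  | zero => exact h0
  | one => exact h1
  | more n ih ih' =>
    have h := hrec (n + 1) n.succ_pos
    rw [Nat.add_sub_cancel, ih, ih'] at h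
    exact mul_right_cancel₀ (monic_yablonskiiVorobev n).ne_zero
      (h.trans (isYVTriple_yablonskiiVorobev n).mul_eq_yvRhs.symm)

/-- There exists a sequence of polynomials satisfying the Yablonskii–Vorob'ev
recurrence (i.e. each a priori rational function `Y_{n+1}` is a polynomial), and any
such sequence satisfies `deg Y_n = n(n+1)/2`. -/
theorem yablonskii_vorobev_exists_and_degree :
    (∃ Y : ℕ → Polynomial ℚ, IsYablonskiiVorobev Y) ∧
      ∀ Y : ℕ → Polynomial ℚ, IsYablonskiiVorobev Y →
        ∀ n : ℕ, (Y n).natDegree = n * (n + 1) / 2 :=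
  ⟨⟨_, isYablonskiiVorobev_yablonskiiVorobev⟩,
    fun _ hY n => hY.eq_yablonskiiVorobev ▸ natDegree_yablonskiiVorobev n⟩
end
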